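/- arXiv:2401.09659 — 5 statements merged into one kernel-verified Lean document; each statement's English description precedes it below -/
import Mathlib

section
/- Determinacy of all Borel games with taboos is level-by-level equivalent to determinacy of Borel games on pruned game trees: in particular, if for every pruned game tree T' and every A' ⊆ [T'] in the Borel class Γ the game G(A';T') is determined, then for every game tree with taboos T and every A ⊆ [T] in Γ, the game G(A;T) is determined. -/
universe u v

/-- A game tree: a nonempty set of finite sequences closed under initial segments. -/
def IsGameTree {X : Type*} (T : Set (List X)) : Prop :=
  T.Nonempty ∧ ∀ ⦃p q : List X⦄, q ∈ T → p <+: q → p ∈ T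

/-- A terminal position: a position with no proper extension in the tree. -/
def IsTerminal {X : Type*} (T : Set (List X)) (p : List X) : Prop :=
  p ∈ T ∧ ∀ a : X, p ++ [a] ∉ T

/-- A pruned game tree has no terminal positions. -/
def IsPruned {X : Type*} (T : Set (List X)) : Prop :=
  ∀ p ∈ T, ∃ a : X, p ++ [a] ∈ T

/-- The game subtree at a position `p`. -/
def subtreeAt {X : Type*} (T : Set (List X)) (p : List X) : Set (List X) :=
  {q | q ∈ T ∧ (q <+: p ∨ p <+: q)}

/-- The initial segment of length `n` of an infinite sequence. -/
def prefixFn {X : Type*} (x : ℕ → X) (n : ℕ) : List X :=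
  List.ofFn fun i : Fin n => x i

/-- The set of infinite branches through a tree. -/
def body {X : Type*} (T : Set (List X)) : Set (ℕ → X) :=
  {x | ∀ n, prefixFn x n ∈ T}

/-- `Turn pl n` holds when it is player `pl`'s turn to move at a position of length `n`
(`true` is player I, moving at even stages, `false` is player II). -/
def Turn (pl : Bool) (n : ℕ) : Prop := if pl then Even n else Odd n

/-- A position is consistent with a strategy `σ` for player `pl` if all the moves of
player `pl` along it follow `σ`. -/
def PosConsistent {X : Type*} (pl : Bool) (σ : List X → X) (p : List X) : Prop :=
  ∀ (k : ℕ) (h : k < p.length), Turn pl k → p.get ⟨k, h⟩ = σ (p.take k)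

/-- An infinite branch is consistent with a strategy `σ` for player `pl` if all the moves of
player `pl` along it follow `σ`. -/
def BranchConsistent {X : Type*} (pl : Bool) (σ : List X → X) (x : ℕ → X) : Prop :=
  ∀ k : ℕ, Turn pl k → x k = σ (prefixFn x k)

/-- `σ` is a (legal) strategy for player `pl` in `T`: at any nonterminal position of `T`
consistent with `σ` where it is `pl`'s turn, it produces a legal move. -/
def IsStrategy {X : Type*} (T : Set (List X)) (pl : Bool) (σ : List X → X) : Prop :=
  ∀ p ∈ T, ¬ IsTerminal T p → Turn pl p.length → PosConsistent pl σ p →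
    p ++ [σ p] ∈ T


/-- A game tree with taboos: a game tree together with a partition of its terminal
positions into taboos for player I and taboos for player II. -/
structure TabooTree (X : Type*) where
  T : Set (List X)
  isTree : IsGameTree T
  tabooI : Set (List X)
  tabooII : Set (List X)
  tabooI_terminal : ∀ p ∈ tabooI, IsTerminal T p
  tabooII_terminal : ∀ p ∈ tabooII, IsTerminal T p
  taboo_disjoint : Disjoint tabooI tabooII
  taboo_cover : ∀ p, IsTerminal T p → p ∈ tabooI ∪ tabooII

/-- `σ` is a winning strategy for player I in the game with payoff `A` on the tree `T`
whose taboos for player II are `tabooII`: every finite play (terminal position)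
consistent with `σ` is a taboo for II, and every infinite play consistent with `σ` is in `A`. -/
def WinsI {X : Type*} (T tabooII : Set (List X)) (A : Set (ℕ → X)) (σ : List X → X) : Prop :=
  IsStrategy T true σ ∧
  (∀ p, IsTerminal T p → PosConsistent true σ p → p ∈ tabooII) ∧
  (∀ x ∈ body T, BranchConsistent true σ x → x ∈ A)

/-- `τ` is a winning strategy for player II: every finite play consistent with `τ` is a
taboo for I, and every infinite play consistent with `τ` is outside `A`. -/
def WinsII {X : Type*} (T tabooI : Set (List X)) (A : Set (ℕ → X)) (τ : List X → X) : Prop :=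
  IsStrategy T false τ ∧
  (∀ p, IsTerminal T p → PosConsistent false τ p → p ∈ tabooI) ∧
  (∀ x ∈ body T, BranchConsistent false τ x → x ∉ A)

/-- Determinacy of the game on tree `T` with taboos `tI`, `tII` and payoff `A`. -/
def DeterminedOn {X : Type*} (T tI tII : Set (List X)) (A : Set (ℕ → X)) : Prop :=
  (∃ σ, WinsI T tII A σ) ∨ (∃ τ, WinsII T tI A τ)

/-- Determinacy of the game with taboos `G(A; M)`. -/
def Determined {X : Type*} (M : TabooTree X) (A : Set (ℕ → X)) : Prop :=
  DeterminedOn M.T M.tabooI M.tabooII A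


/-!
Call a position *decided* if one of the players can force the play, in finitely many moves,
into a terminal position that is a taboo for the opponent (an open game, solved by the
attractor construction `Forces`). The positions none of whose initial segments is decided
form a pruned subtree `T₂`: at an undecided position the player to move has a move that
keeps the position undecided for both players. A winning strategy in the ordinary game on
`T₂` lifts to the game with taboos: play it as long as the play stays in `T₂`; the play can
only leave `T₂` by a move of the opponent, into a position decided in our favour, from
which we switch to the attractor strategy.
-/

section

variable {X : Type*}

lemma turn_not {pl : Bool} {n : ℕ} : Turn (!pl) n ↔ ¬ Turn pl n := by
  cases pl <;> simp [Turn, Nat.not_even_iff_odd]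

lemma exists_turn (n : ℕ) : ∃ pl, Turn pl n :=
  (em (Turn true n)).elim (⟨true, ·⟩) fun h => ⟨false, turn_not.2 h⟩

lemma List.IsPrefix.exists_append_singleton_prefix {p q : List X} (h : p <+: q) (hne : q ≠ p) :
    ∃ a, p ++ [a] <+: q := by
  obtain ⟨_ | ⟨a, t⟩, rfl⟩ := h
  · exact absurd (List.append_nil p) hne
  · exact ⟨a, by simp⟩

lemma IsGameTree.nil_mem {T : Set (List X)} (hT : IsGameTree T) : [] ∈ T :=
  hT.2 hT.1.some_mem List.nil_prefix

lemma IsTerminal.eq_of_prefix {T : Set (List X)} (hT : IsGameTree T) {p q : List X}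
    (hp : IsTerminal T p) (hq : q ∈ T) (hpq : p <+: q) : q = p := by
  by_contra hne
  obtain ⟨a, ha⟩ := hpq.exists_append_singleton_prefix hne
  exact hp.2 a (hT.2 hq ha)

lemma IsPruned.not_isTerminal {S : Set (List X)} (hS : IsPruned S) {p : List X} (hp : p ∈ S) :
    ¬ IsTerminal S p :=
  fun ht => (hS p hp).elim ht.2

lemma prefixFn_length (x : ℕ → X) (n : ℕ) : (prefixFn x n).length = n := by
  simp [prefixFn]

lemma prefixFn_succ (x : ℕ → X) (n : ℕ) : prefixFn x (n + 1) = prefixFn x n ++ [x n] :=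
  List.ofFn_succ_last

lemma eq_prefixFn_of_prefix {x : ℕ → X} {q : List X} {n : ℕ} (h : q <+: prefixFn x n) :
    q = prefixFn x q.length := by
  refine List.ext_getElem (prefixFn_length x _).symm fun i hi _ => ?_
  rw [h.getElem hi]
  simp [prefixFn]

def ConsistentFrom (pl : Bool) (σ : List X → X) (p q : List X) : Prop :=
  ∀ r a, p <+: r → r ++ [a] <+: q → Turn pl r.length → a = σ r

section ConsistentFrom

variable {pl : Bool} {σ σ' : List X → X} {p p' q q' : List X}

lemma consistentFrom_nil_iff : ConsistentFrom pl σ [] q ↔ PosConsistent pl σ q := by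
  constructor
  · intro h k hk ht
    have hpre : q.take k ++ [q[k]] <+: q := by
      rw [List.take_concat_get' q k hk]
      exact List.take_prefix _ _
    simpa using h _ _ List.nil_prefix hpre (by simpa [hk.le] using ht)
  · intro h r a _ hra ht
    have hk : r.length < q.length := by simpa using hra.length_le
    have hr : r = q.take r.length :=
      List.prefix_iff_eq_take.1 ((List.prefix_append r [a]).trans hra)
    have ha : q[r.length] = a := by
      rw [← hra.getElem (by simp)]
      simp
    simpa [ha, ← hr] using h r.length hk ht

lemma ConsistentFrom.mono (h : ConsistentFrom pl σ p q) (hp : p <+: p') (hq : q' <+: q) :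
    ConsistentFrom pl σ p' q' :=
  fun r a hr hra => h r a (hp.trans hr) (hra.trans hq)

lemma ConsistentFrom.congr (h : ConsistentFrom pl σ p q)
    (hσ : ∀ r, p <+: r → r <+: q → σ r = σ' r) : ConsistentFrom pl σ' p q :=
  fun r a hr hra ht => (h r a hr hra ht).trans (hσ r hr ((List.prefix_append r [a]).trans hra))

lemma BranchConsistent.consistentFrom_prefixFn {x : ℕ → X} (h : BranchConsistent pl σ x)
    (n : ℕ) : ConsistentFrom pl σ [] (prefixFn x n) := by
  intro r a _ hra ht
  have hr := eq_prefixFn_of_prefix hra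
  rw [List.length_append, List.length_singleton, prefixFn_succ] at hr
  obtain ⟨hr, ha⟩ := List.append_inj' hr rfl
  rw [List.singleton_inj.1 ha, h _ ht, ← hr]

end ConsistentFrom

/-- Player `pl` can force the play from `p`, in finitely many moves, into the set `tab` of
terminal positions. -/
inductive Forces (T tab : Set (List X)) (pl : Bool) : List X → Prop
  | base {p : List X} : p ∈ tab → Forces T tab pl p
  | mine {p : List X} {a : X} : Turn pl p.length → p ++ [a] ∈ T →
      Forces T tab pl (p ++ [a]) → Forces T tab pl p
  | yours {p : List X} : Turn (!pl) p.length → (∃ a, p ++ [a] ∈ T) →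
      (∀ a, p ++ [a] ∈ T → Forces T tab pl (p ++ [a])) → Forces T tab pl p

/-- `σ` wins for `pl` from `p` the game whose finite plays are won by `pl` exactly when they
lie in `tab` and whose infinite plays are all lost by `pl`. -/
def WinsFrom (T tab : Set (List X)) (pl : Bool) (σ : List X → X) (p : List X) : Prop :=
  (∀ q ∈ T, p <+: q → ¬ IsTerminal T q → Turn pl q.length → ConsistentFrom pl σ p q →
    q ++ [σ q] ∈ T) ∧
  (∀ q, IsTerminal T q → p <+: q → ConsistentFrom pl σ p q → q ∈ tab) ∧
  ∀ x ∈ body T, prefixFn x p.length = p → (∀ n, ConsistentFrom pl σ p (prefixFn x n)) →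
    False

section WinsFrom

variable {T tab : Set (List X)} {pl : Bool} {σ σ' : List X → X} {p : List X}

lemma WinsFrom.congr (h : WinsFrom T tab pl σ p) (hσ : ∀ q, p <+: q → σ q = σ' q) :
    WinsFrom T tab pl σ' p := by
  have hcons : ∀ q, ConsistentFrom pl σ' p q → ConsistentFrom pl σ p q :=
    fun q hq => hq.congr fun r hr _ => (hσ r hr).symm
  refine ⟨fun q hq hpq hnt ht hc => ?_, fun q ht hpq hc => h.2.1 q ht hpq (hcons q hc),
    fun x hx hxp hc => h.2.2 x hx hxp fun n => hcons _ (hc n)⟩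
  rw [← hσ q hpq]
  exact h.1 q hq hpq hnt ht (hcons q hc)

lemma winsFrom_of_mem (hT : IsGameTree T) (htab : ∀ q ∈ tab, IsTerminal T q) (hp : p ∈ tab) :
    WinsFrom T tab pl σ p := by
  have hterm := htab p hp
  refine ⟨fun q hq hpq hnt _ _ => ?_, fun q hq hpq _ => ?_, fun x hx hxp _ => ?_⟩
  · exact absurd (hterm.eq_of_prefix hT hq hpq ▸ hterm) hnt
  · exact hterm.eq_of_prefix hT hq.1 hpq ▸ hp
  · exact hterm.2 (x p.length) (by simpa [prefixFn_succ, hxp] using hx (p.length + 1))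

lemma winsFrom_of_forall_append_singleton (hT : IsGameTree T) (hp : ¬ IsTerminal T p)
    (hmove : Turn pl p.length → p ++ [σ p] ∈ T)
    (hchild : ∀ a, p ++ [a] ∈ T → (Turn pl p.length → a = σ p) →
      WinsFrom T tab pl σ (p ++ [a])) :
    WinsFrom T tab pl σ p := by
  have hstep : ∀ q ∈ T, p <+: q → q ≠ p → ConsistentFrom pl σ p q →
      ∃ a, p ++ [a] <+: q ∧ WinsFrom T tab pl σ (p ++ [a]) ∧
        ConsistentFrom pl σ (p ++ [a]) q := by
    intro q hq hpq hne hc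
    obtain ⟨a, ha⟩ := hpq.exists_append_singleton_prefix hne
    exact ⟨a, ha, hchild a (hT.2 hq ha) (hc p a List.prefix_rfl ha),
      hc.mono (List.prefix_append p [a]) List.prefix_rfl⟩
  refine ⟨fun q hq hpq hnt ht hc => ?_, fun q ht hpq hc => ?_, fun x hx hxp hc => ?_⟩
  · obtain rfl | hne := eq_or_ne q p
    · exact hmove ht
    · obtain ⟨a, ha, hwin, hca⟩ := hstep q hq hpq hne hc
      exact hwin.1 q hq ha hnt ht hca
  · obtain ⟨a, ha, hwin, hca⟩ := hstep q ht.1 hpq (fun h => hp (h ▸ ht)) hc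
    exact hwin.2.1 q ht ha hca
  · have hxa : prefixFn x (p.length + 1) = p ++ [x p.length] := by rw [prefixFn_succ, hxp]
    have hxa' : prefixFn x (p ++ [x p.length]).length = p ++ [x p.length] := by
      simpa using hxa
    refine (hchild _ (hxa ▸ hx _) fun ht => ?_).2.2 x hx hxa' fun n =>
      (hc n).mono (List.prefix_append p _) List.prefix_rfl
    exact hc (p.length + 1) p _ List.prefix_rfl (hxa ▸ List.prefix_rfl) ht

end WinsFrom

section Forces

variable [Nonempty X] {T tab : Set (List X)} {pl : Bool} {p : List X}

lemma Forces.exists_winsFrom (hT : IsGameTree T) (htab : ∀ q ∈ tab, IsTerminal T q)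
    (h : Forces T tab pl p) : ∃ σ, WinsFrom T tab pl σ p := by
  classical
  induction h with
  | base hp => exact ⟨fun _ => Classical.arbitrary X, winsFrom_of_mem hT htab hp⟩
  | @mine p a ht ha _ ih =>
    obtain ⟨σ, hσ⟩ := ih
    refine ⟨Function.update σ p a, winsFrom_of_forall_append_singleton hT
      (fun hp => hp.2 a ha) (fun _ => by simpa using ha) fun b _ hb => ?_⟩
    rw [hb ht, Function.update_self]
    refine hσ.congr fun q hq => (Function.update_of_ne ?_ _ _).symm
    rintro rfl
    simpa using hq.length_le
  | @yours p ht hne _ ih =>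
    choose! σ hσ using ih
    -- after the opponent's move `a` at `p`, follow the strategy `σ a`
    refine ⟨fun q => σ (q.getD p.length (Classical.arbitrary X)) q,
      winsFrom_of_forall_append_singleton hT (fun hp => hne.elim fun a ha => hp.2 a ha)
        (fun ht' => absurd ht' (turn_not.1 ht))
        fun a ha _ => (hσ a ha).congr fun q hq => ?_⟩
    obtain ⟨t, rfl⟩ := hq
    simp

lemma Forces.exists_strategy (hT : IsGameTree T) (htab : ∀ q ∈ tab, IsTerminal T q)
    (h : Forces T tab pl []) :
    ∃ σ, IsStrategy T pl σ ∧ (∀ p, IsTerminal T p → PosConsistent pl σ p → p ∈ tab) ∧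
      ∀ x ∈ body T, BranchConsistent pl σ x → False := by
  obtain ⟨σ, hmove, hterm, hbranch⟩ := h.exists_winsFrom hT htab
  refine ⟨σ, fun q hq hnt ht hc => ?_, fun q ht hc => ?_,
    fun x hx hc => hbranch x hx rfl hc.consistentFrom_prefixFn⟩
  · exact hmove q hq List.nil_prefix hnt ht (consistentFrom_nil_iff.2 hc)
  · exact hterm q ht List.nil_prefix (consistentFrom_nil_iff.2 hc)

end Forces

open scoped Classical in
/-- Follow `σ₂` inside `T₂`; outside, follow `τ r` where `r` is the first position of the
play outside `T₂`. -/
noncomputable def liftStrategy (T₂ : Set (List X)) (σ₂ : List X → X)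
    (τ : List X → List X → X) (q : List X) : X :=
  if h : ∃ n, q.take n ∉ T₂ then τ (q.take (Nat.find h)) q else σ₂ q

section liftStrategy

variable {T T₂ tab : Set (List X)} {pl : Bool} {σ₂ : List X → X} {τ : List X → List X → X}

lemma liftStrategy_of_mem (hT₂ : IsGameTree T₂) {q : List X} (hq : q ∈ T₂) :
    liftStrategy T₂ σ₂ τ q = σ₂ q := by
  classical
  rw [liftStrategy, dif_neg]
  push Not
  exact fun n => hT₂.2 hq (List.take_prefix n q)

lemma liftStrategy_of_exit (hT₂ : IsGameTree T₂) {s q : List X} {a : X} (hs : s ∈ T₂)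
    (hsa : s ++ [a] ∉ T₂) (hq : s ++ [a] <+: q) :
    liftStrategy T₂ σ₂ τ q = τ (s ++ [a]) q := by
  classical
  have htake : q.take (s ++ [a]).length = s ++ [a] := (List.prefix_iff_eq_take.1 hq).symm
  have hex : ∃ n, q.take n ∉ T₂ := ⟨_, by rwa [htake]⟩
  have hfind : Nat.find hex = (s ++ [a]).length := by
    refine (Nat.find_eq_iff hex).2 ⟨by rwa [htake], fun n hn => not_not.2 (hT₂.2 hs ?_)⟩
    refine List.prefix_of_prefix_length_le (List.take_prefix n q)
      ((List.prefix_append s [a]).trans hq) ?_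
    have hn' : n ≤ s.length := by simpa [Nat.lt_succ_iff] using hn
    exact (List.length_take_le n q).trans hn'
  rw [liftStrategy, dif_pos hex, hfind, htake]

lemma PosConsistent.of_liftStrategy (hT₂ : IsGameTree T₂) {q : List X} (hq : q ∈ T₂)
    (hc : PosConsistent pl (liftStrategy T₂ σ₂ τ) q) : PosConsistent pl σ₂ q :=
  fun k hk ht =>
    (hc k hk ht).trans (liftStrategy_of_mem hT₂ (hT₂.2 hq (List.take_prefix k q)))

/-- A play consistent with the lifted strategy can leave `T₂` only through a move of the
opponent, into a position forced by `pl`, from which the lifted strategy wins. -/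
lemma exists_prefix_winsFrom_liftStrategy (hT : IsGameTree T) (hT₂ : IsGameTree T₂)
    (hpr : IsPruned T₂) (hσ₂ : IsStrategy T₂ pl σ₂)
    (hesc : ∀ s ∈ T₂, ∀ a, Turn (!pl) s.length → s ++ [a] ∈ T → s ++ [a] ∉ T₂ →
      Forces T tab pl (s ++ [a]))
    (hτ : ∀ r, Forces T tab pl r → WinsFrom T tab pl (τ r) r) {q : List X} (hq : q ∈ T)
    (hc : ConsistentFrom pl (liftStrategy T₂ σ₂ τ) [] q) (hq₂ : q ∉ T₂) :
    ∃ r, r <+: q ∧ WinsFrom T tab pl (liftStrategy T₂ σ₂ τ) r := by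
  induction q using List.reverseRecOn with
  | nil => exact absurd hT₂.nil_mem hq₂
  | append_singleton s a ih =>
    have hs : s ∈ T := hT.2 hq (List.prefix_append s [a])
    by_cases hs₂ : s ∈ T₂
    · have hturn : Turn (!pl) s.length := by
        refine turn_not.2 fun ht => hq₂ ?_
        have hsa : a = σ₂ s := by
          rw [hc s a List.nil_prefix List.prefix_rfl ht, liftStrategy_of_mem hT₂ hs₂]
        have hcs := hc.mono List.prefix_rfl (List.prefix_append s [a])
        exact hsa ▸ hσ₂ s hs₂ (hpr.not_isTerminal hs₂) ht
          ((consistentFrom_nil_iff.1 hcs).of_liftStrategy hT₂ hs₂)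
      refine ⟨s ++ [a], List.prefix_rfl, (hτ _ (hesc s hs₂ a hturn hq hq₂)).congr
        fun q hq => (liftStrategy_of_exit hT₂ hs₂ hq₂ hq).symm⟩
    · obtain ⟨r, hr, hwin⟩ := ih hs (hc.mono List.prefix_rfl (List.prefix_append s [a])) hs₂
      exact ⟨r, hr.trans (List.prefix_append s [a]), hwin⟩

theorem IsStrategy.exists_lift [Nonempty X] (hT : IsGameTree T)
    (htab : ∀ q ∈ tab, IsTerminal T q) (hT₂ : IsGameTree T₂) (hsub : T₂ ⊆ T)
    (hpr : IsPruned T₂) (hσ₂ : IsStrategy T₂ pl σ₂)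
    (hesc : ∀ s ∈ T₂, ∀ a, Turn (!pl) s.length → s ++ [a] ∈ T → s ++ [a] ∉ T₂ →
      Forces T tab pl (s ++ [a])) :
    ∃ σ, IsStrategy T pl σ ∧ (∀ p, IsTerminal T p → PosConsistent pl σ p → p ∈ tab) ∧
      ∀ x ∈ body T, BranchConsistent pl σ x → x ∈ body T₂ ∧ BranchConsistent pl σ₂ x := by
  have hτ (r : List X) : ∃ σ, Forces T tab pl r → WinsFrom T tab pl σ r :=
    (em (Forces T tab pl r)).elim (fun h => (h.exists_winsFrom hT htab).imp fun _ h _ => h)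
      fun h => ⟨fun _ => Classical.arbitrary X, fun h' => absurd h' h⟩
  choose τ hτ using hτ
  have hexit := fun {q} =>
    exists_prefix_winsFrom_liftStrategy (q := q) hT hT₂ hpr hσ₂ hesc hτ
  refine ⟨liftStrategy T₂ σ₂ τ, fun q hq hnt ht hc => ?_, fun q ht hc => ?_, fun x hx hc => ?_⟩
  · by_cases hq₂ : q ∈ T₂
    · rw [liftStrategy_of_mem hT₂ hq₂]
      exact hsub (hσ₂ q hq₂ (hpr.not_isTerminal hq₂) ht (hc.of_liftStrategy hT₂ hq₂))
    · rw [← consistentFrom_nil_iff] at hc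
      obtain ⟨r, hr, hwin⟩ := hexit hq hc hq₂
      exact hwin.1 q hq hr hnt ht (hc.mono List.nil_prefix List.prefix_rfl)
  · by_cases hq₂ : q ∈ T₂
    · obtain ⟨a, ha⟩ := hpr q hq₂
      exact absurd (hsub ha) (ht.2 a)
    · rw [← consistentFrom_nil_iff] at hc
      obtain ⟨r, hr, hwin⟩ := hexit ht.1 hc hq₂
      exact hwin.2.1 q ht hr (hc.mono List.nil_prefix List.prefix_rfl)
  · by_cases hx₂ : x ∈ body T₂
    · refine ⟨hx₂, fun k hk => ?_⟩
      rw [hc k hk, liftStrategy_of_mem hT₂ (hx₂ k)]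
    · obtain ⟨n, hn⟩ := not_forall.1 hx₂
      obtain ⟨r, hr, hwin⟩ := hexit (hx n) (hc.consistentFrom_prefixFn n) hn
      exact (hwin.2.2 x hx (eq_prefixFn_of_prefix hr).symm fun m =>
        (hc.consistentFrom_prefixFn m).mono List.nil_prefix List.prefix_rfl).elim

end liftStrategy

namespace TabooTree

variable (M : TabooTree X)

def wonBy (pl : Bool) : Set (List X) := bif pl then M.tabooII else M.tabooI

lemma wonBy_terminal {pl : Bool} : ∀ p ∈ M.wonBy pl, IsTerminal M.T p := by
  cases pl
  exacts [M.tabooI_terminal, M.tabooII_terminal]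

def Decided (p : List X) : Prop := ∃ pl, Forces M.T (M.wonBy pl) pl p

def undecidedTree : Set (List X) := {p | p ∈ M.T ∧ ∀ r, r <+: p → ¬ M.Decided r}

variable {M}

lemma isGameTree_undecidedTree (h : ¬ M.Decided []) : IsGameTree M.undecidedTree :=
  ⟨⟨[], M.isTree.nil_mem, fun _ hr => List.prefix_nil.1 hr ▸ h⟩,
    fun _ _ hq hpq => ⟨M.isTree.2 hq.1 hpq, fun r hr => hq.2 r (hr.trans hpq)⟩⟩

lemma append_singleton_mem_undecidedTree {p : List X} {a : X} (hp : p ∈ M.undecidedTree)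
    (ha : p ++ [a] ∈ M.T) (hd : ¬ M.Decided (p ++ [a])) : p ++ [a] ∈ M.undecidedTree := by
  refine ⟨ha, fun r hr => ?_⟩
  rcases List.prefix_concat_iff.1 hr with rfl | hr
  exacts [hd, hp.2 r hr]

lemma isPruned_undecidedTree : IsPruned M.undecidedTree := by
  intro p hp
  obtain ⟨pl, ht⟩ := exists_turn p.length
  have hnd : ∀ pl, ¬ Forces M.T (M.wonBy pl) pl p :=
    fun pl h => hp.2 p List.prefix_rfl ⟨pl, h⟩
  have hnt : ∃ a, p ++ [a] ∈ M.T := by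
    by_contra! hterm
    obtain hI | hII := M.taboo_cover p ⟨hp.1, hterm⟩
    exacts [hnd false (.base hI), hnd true (.base hII)]
  have hopp : ∃ a, p ++ [a] ∈ M.T ∧ ¬ Forces M.T (M.wonBy (!pl)) (!pl) (p ++ [a]) := by
    by_contra! h
    exact hnd (!pl) (.yours (by rwa [Bool.not_not]) hnt h)
  obtain ⟨a, ha, hna⟩ := hopp
  refine ⟨a, append_singleton_mem_undecidedTree hp ha ?_⟩
  rintro ⟨pl', hpl'⟩
  rcases Bool.eq_or_eq_not pl' pl with rfl | rfl
  exacts [hnd pl' (.mine ht ha hpl'), hna hpl']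

/-- A position forced by the opponent after his own move is already forced before it. -/
lemma forces_of_not_mem_undecidedTree {pl : Bool} {s : List X} {a : X}
    (hs : s ∈ M.undecidedTree) (ht : Turn (!pl) s.length) (hsa : s ++ [a] ∈ M.T)
    (hsa₂ : s ++ [a] ∉ M.undecidedTree) : Forces M.T (M.wonBy pl) pl (s ++ [a]) := by
  obtain ⟨pl', hpl'⟩ : M.Decided (s ++ [a]) :=
    by_contra fun hd => hsa₂ (append_singleton_mem_undecidedTree hs hsa hd)
  rcases Bool.eq_or_eq_not pl' pl with rfl | rfl
  · exact hpl'
  · exact absurd ⟨!pl, .mine ht hsa hpl'⟩ (hs.2 s List.prefix_rfl)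

lemma exists_lift_of_isStrategy_undecidedTree [Nonempty X] {pl : Bool}
    (hroot : ¬ M.Decided []) {σ₂ : List X → X} (hσ₂ : IsStrategy M.undecidedTree pl σ₂) :
    ∃ σ, IsStrategy M.T pl σ ∧
      (∀ p, IsTerminal M.T p → PosConsistent pl σ p → p ∈ M.wonBy pl) ∧
      ∀ x ∈ body M.T, BranchConsistent pl σ x →
        x ∈ body M.undecidedTree ∧ BranchConsistent pl σ₂ x :=
  hσ₂.exists_lift M.isTree M.wonBy_terminal (isGameTree_undecidedTree hroot) (fun _ hp => hp.1)
    isPruned_undecidedTree fun _ hs _ ht hsa hsa₂ =>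
      forces_of_not_mem_undecidedTree hs ht hsa hsa₂

end TabooTree

end

/-- determinacy of games with taboos is level-by-level equivalent to
determinacy on pruned trees: if for every pruned game tree `T'` and every payoff in the
class `Γ` (relativized to `[T']`) the ordinary game is determined, then every game
with taboos whose payoff is in `Γ` (relativized to `[T]`) is determined. -/
theorem stmt2 {X : Type*} [Nonempty X] (Γ : Set (Set (ℕ → X)))
    (h : ∀ T' : Set (List X), IsGameTree T' → IsPruned T' →
      ∀ G ∈ Γ, DeterminedOn T' ∅ ∅ (G ∩ body T'))
    (M : TabooTree X) (G : Set (ℕ → X)) (hG : G ∈ Γ) :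
    Determined M (G ∩ body M.T) := by
  by_cases hroot : M.Decided []
  · obtain ⟨pl, hpl⟩ := hroot
    obtain ⟨σ, hσ, hterm, hbranch⟩ := hpl.exists_strategy M.isTree M.wonBy_terminal
    cases pl
    · exact Or.inr ⟨σ, hσ, hterm, fun x hx hc => (hbranch x hx hc).elim⟩
    · exact Or.inl ⟨σ, hσ, hterm, fun x hx hc => (hbranch x hx hc).elim⟩
  rcases h _ (TabooTree.isGameTree_undecidedTree hroot) TabooTree.isPruned_undecidedTree G hG
    with ⟨σ₂, hσ₂, -, hwin⟩ | ⟨τ₂, hτ₂, -, hwin⟩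
  · obtain ⟨σ, hσ, hterm, hbranch⟩ := M.exists_lift_of_isStrategy_undecidedTree hroot hσ₂
    refine Or.inl ⟨σ, hσ, hterm, fun x hx hc => ?_⟩
    obtain ⟨hx₂, hc₂⟩ := hbranch x hx hc
    exact ⟨(hwin x hx₂ hc₂).1, hx⟩
  · obtain ⟨τ, hτ, hterm, hbranch⟩ := M.exists_lift_of_isStrategy_undecidedTree hroot hτ₂
    refine Or.inr ⟨τ, hτ, hterm, fun x hx hc hxG => ?_⟩
    obtain ⟨hx₂, hc₂⟩ := hbranch x hx hc
    exact hwin x hx₂ hc₂ ⟨hxG.1, hx₂⟩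
end

section
/- Let σ' be a winning strategy for player I in the game G(A ∩ [T']; T'), where T' is the set of positions of T that are not taboo-determined for either player. Then the strategy σ for I in T — which follows σ' while play remains in T', and upon first entering a position q taboo-determined for I switches to a taboo-strategy for T_q — is a winning strategy for I in the game with taboos G(A;T). Moreover, in a play consistent with σ, player II can never be the first to enter a position taboo-determined for II. -/
universe u v

/-- Consistency with `σ` for the moves of player `pl` from stage `m` on. -/
def PosConsistentFrom {X : Type*} (pl : Bool) (σ : List X → X) (m : ℕ) (p : List X) : Prop :=
  ∀ (k : ℕ) (h : k < p.length), m ≤ k → Turn pl k → p.get ⟨k, h⟩ = σ (p.take k)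

/-- Consistency with `σ` for the moves of player `pl` from stage `m` on (infinite plays). -/
def BranchConsistentFrom {X : Type*} (pl : Bool) (σ : List X → X) (m : ℕ) (x : ℕ → X) : Prop :=
  ∀ k : ℕ, m ≤ k → Turn pl k → x k = σ (prefixFn x k)

/-- A legal strategy in a game subtree whose first `m` moves are fixed. -/
def IsStrategyFrom {X : Type*} (T : Set (List X)) (pl : Bool) (m : ℕ) (σ : List X → X) : Prop :=
  ∀ p ∈ T, ¬ IsTerminal T p → Turn pl p.length → m ≤ p.length →
    PosConsistentFrom pl σ m p → p ++ [σ p] ∈ T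

/-- `σ` is a taboo-strategy for player `pl` in the game subtree `M_p`: every play of the
subtree consistent with it (from stage `|p|` on) is a taboo for the opposite player;
in particular no infinite play is consistent with it. -/
def IsTabooStrategyAt {X : Type*} (M : TabooTree X) (pl : Bool) (p : List X)
    (σ : List X → X) : Prop :=
  IsStrategyFrom (subtreeAt M.T p) pl p.length σ ∧
  (∀ q, IsTerminal (subtreeAt M.T p) q → p <+: q → PosConsistentFrom pl σ p.length q →
      q ∈ (if pl then M.tabooII else M.tabooI)) ∧
  (∀ x ∈ body (subtreeAt M.T p), ¬ BranchConsistentFrom pl σ p.length x)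

/-- A position is taboo-determined for player `pl` if `pl` has a taboo-strategy in `M_p`. -/
def TabooDetermined {X : Type*} (M : TabooTree X) (pl : Bool) (p : List X) : Prop :=
  ∃ σ : List X → X, IsTabooStrategyAt M pl p σ


section Aux

variable {X : Type*}

lemma turnT {n : ℕ} : Turn true n ↔ Even n := by simp [Turn]

lemma turnF {n : ℕ} : Turn false n ↔ Odd n := by simp [Turn]

lemma take_eq_of_prefix {r p : List X} (h : r <+: p) {k : ℕ} (hk : k ≤ r.length) :
    r.take k = p.take k := by
  obtain ⟨t, rfl⟩ := h
  rw [List.take_append_of_le_length hk]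

lemma take_of_prefix {q p : List X} (h : q <+: p) : p.take q.length = q :=
  (List.prefix_iff_eq_take.mp h).symm

lemma prefix_take_of_le {q p : List X} (h : q <+: p) {k : ℕ} (hk : q.length ≤ k) :
    q <+: p.take k := by
  have h1 : (p.take k).take q.length = q := by
    rw [List.take_take, min_eq_left hk, take_of_prefix h]
  rw [← h1]
  exact List.take_prefix _ _

lemma get_of_prefix {r p : List X} (h : r <+: p) {k : ℕ} (hk : k < r.length) :
    p.get ⟨k, lt_of_lt_of_le hk h.length_le⟩ = r.get ⟨k, hk⟩ := by
  simp only [List.get_eq_getElem]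
  exact (h.getElem hk).symm

lemma posConsistent_of_prefix {pl : Bool} {σ : List X → X} {p r : List X}
    (hc : PosConsistent pl σ p) (h : r <+: p) : PosConsistent pl σ r := by
  intro k hk ht
  calc r.get ⟨k, hk⟩ = p.get ⟨k, lt_of_lt_of_le hk h.length_le⟩ := (get_of_prefix h hk).symm
    _ = σ (p.take k) := hc k _ ht
    _ = σ (r.take k) := by rw [take_eq_of_prefix h (le_of_lt hk)]

lemma prefixFn_prefix (x : ℕ → X) {m n : ℕ} (h : m ≤ n) : prefixFn x m <+: prefixFn x n := by
  induction n with
  | zero =>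
    have : m = 0 := Nat.le_zero.mp h
    subst this; exact List.prefix_refl _
  | succ n ih =>
    rcases Nat.lt_or_ge m (n + 1) with h' | h'
    · exact (ih (Nat.lt_succ_iff.mp h')).trans (by rw [prefixFn_succ]; exact List.prefix_append _ _)
    · have : m = n + 1 := le_antisymm h h'
      subst this; exact List.prefix_refl _

lemma prefixFn_take (x : ℕ → X) {m n : ℕ} (h : m ≤ n) :
    (prefixFn x n).take m = prefixFn x m := by
  have h1 := take_of_prefix (prefixFn_prefix x h)
  rwa [prefixFn_length] at h1

lemma prefixFn_get (x : ℕ → X) {n k : ℕ} (hk : k < n) (h : k < (prefixFn x n).length) :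
    (prefixFn x n).get ⟨k, h⟩ = x k := by
  simp [prefixFn]

lemma branch_pos_cons {pl : Bool} {σ : List X → X} {x : ℕ → X}
    (hc : BranchConsistent pl σ x) (n : ℕ) : PosConsistent pl σ (prefixFn x n) := by
  intro k hk tk
  have hkn : k < n := by rwa [prefixFn_length] at hk
  rw [prefixFn_get x hkn hk, hc k tk, prefixFn_take x (le_of_lt hkn)]

lemma subtree_subset (T : Set (List X)) (q : List X) : subtreeAt T q ⊆ T :=
  fun _ hp => hp.1

lemma mem_subtree {T : Set (List X)} {q p : List X} (hp : p ∈ T) (h : q <+: p) :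
    p ∈ subtreeAt T q := ⟨hp, Or.inr h⟩

lemma eq_of_mem_subtree {T : Set (List X)} {q p : List X} (hp : p ∈ subtreeAt T q)
    (h : p.length = q.length) : p = q := by
  rcases hp.2 with h' | h'
  · exact h'.eq_of_length h
  · exact (h'.eq_of_length h.symm).symm

lemma prefix_of_mem_subtree {T : Set (List X)} {q p : List X} (hp : p ∈ subtreeAt T q)
    (h : q.length ≤ p.length) : q <+: p := by
  rcases hp.2 with h' | h'
  · have he : p = q := h'.eq_of_length (le_antisymm h'.length_le h)
    rw [he]
  · exact h'

lemma terminal_subtree {T : Set (List X)} {q p : List X} (ht : IsTerminal T p)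
    (h : q <+: p) : IsTerminal (subtreeAt T q) p :=
  ⟨mem_subtree ht.1 h, fun a ha => ht.2 a ha.1⟩

lemma not_terminal_mono {T : Set (List X)} {r q p : List X} (hr : r <+: q) (hq2 : q <+: p)
    (hpT : p ∈ T) (hnt : ¬ IsTerminal (subtreeAt T r) p) : ¬ IsTerminal (subtreeAt T q) p := by
  intro ht
  apply hnt
  refine ⟨mem_subtree hpT (hr.trans hq2), fun a ha => ?_⟩
  exact ht.2 a (mem_subtree ha.1 (hq2.trans (List.prefix_append _ _)))

lemma exists_ext {T : Set (List X)} {p : List X} (hp : p ∈ T) (hnt : ¬ IsTerminal T p) :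
    ∃ a, p ++ [a] ∈ T := by
  by_contra h
  push_neg at h
  exact hnt ⟨hp, h⟩

lemma firstExit {T' : Set (List X)} {p : List X} (hp : ∃ n, p.take n ∉ T') :
    ∃ q : List X, q <+: p ∧ q ∉ T' ∧ ∀ r, r <+: q → r ≠ q → r ∈ T' := by
  classical
  set n := Nat.find hp with hn
  have hspec : p.take n ∉ T' := Nat.find_spec hp
  have hmin : ∀ m, m < n → p.take m ∈ T' := fun m hm => by
    by_contra h
    exact Nat.find_min hp hm h
  have hnp : n ≤ p.length := by
    by_contra h
    push_neg at h
    have h1 := hmin p.length h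
    rw [List.take_length] at h1
    rw [List.take_of_length_le (le_of_lt h)] at hspec
    exact hspec h1
  refine ⟨p.take n, List.take_prefix _ _, hspec, fun r hr hne => ?_⟩
  have hrlen : r.length ≤ n := by
    have := hr.length_le
    rwa [List.length_take, min_eq_left hnp] at this
  have hlt : r.length < n := by
    rcases lt_or_eq_of_le hrlen with h | h
    · exact h
    · exact absurd (hr.eq_of_length (by rw [List.length_take, min_eq_left hnp, h])) hne
  have hre : r = p.take r.length := by
    have h1 := take_of_prefix hr
    rw [List.take_take, min_eq_left (le_of_lt hlt)] at h1
    exact h1.symm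
  rw [hre]
  exact hmin _ hlt

lemma exit_even {T' : Set (List X)} {σ σ' : List X → X}
    (hσ'₁ : IsStrategy T' true σ')
    (hσ'₂ : ∀ p, IsTerminal T' p → PosConsistent true σ' p → p ∈ (∅ : Set (List X)))
    (hfollow : ∀ p ∈ T', Turn true p.length → σ p = σ' p)
    {q : List X} (hq : q ∉ T') (hne : q ≠ [])
    (hmin : ∀ r, r <+: q → r ≠ q → r ∈ T')
    (hcons : PosConsistent true σ q) : Even q.length := by
  by_contra hodd
  rw [Nat.not_even_iff_odd] at hodd
  have hrq : q.dropLast ++ [q.getLast hne] = q := List.dropLast_append_getLast hne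
  set r := q.dropLast with hrdef
  have hrpre : r <+: q := ⟨_, hrq⟩
  have hlen : q.length = r.length + 1 := by
    rw [hrdef, List.length_dropLast]
    have : 0 < q.length := List.length_pos_iff.mpr hne
    omega
  have hrne : r ≠ q := by
    intro h
    have := congrArg List.length h
    omega
  have hrT : r ∈ T' := hmin r hrpre hrne
  have hre : Even r.length := by
    rw [hlen, Nat.odd_add_one] at hodd
    rwa [Nat.not_odd_iff_even] at hodd
  have hqc := hcons
  have hrc : PosConsistent true σ' r := by
    intro k hk ht
    have h1 := (posConsistent_of_prefix hcons hrpre) k hk ht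
    have hmem : r.take k ∈ T' := by
      apply hmin _ ((List.take_prefix _ _).trans hrpre)
      intro h
      have := congrArg List.length h
      rw [List.length_take] at this
      omega
    have hlt : (r.take k).length = k := by rw [List.length_take]; omega
    rw [h1, hfollow _ hmem (by rw [hlt]; exact ht)]
  have hnterm : ¬ IsTerminal T' r := fun ht => absurd (hσ'₂ r ht hrc) (Set.notMem_empty r)
  have hstep : r ++ [σ' r] ∈ T' := hσ'₁ r hrT hnterm (turnT.mpr hre) hrc
  have hb : q.getLast hne = σ' r := by
    have h2 := hcons r.length (by omega) (turnT.mpr hre)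
    have h3 : q.take r.length = r := by rw [← hrq, List.take_left]
    have h4 : q.getLast hne = q.get ⟨r.length, by omega⟩ := by
      simp only [List.get_eq_getElem]
      rw [List.getLast_eq_getElem]
      have h5 : q.length - 1 = r.length := by omega
      congr 1
    rw [h4, h2, h3, hfollow r hrT (turnT.mpr hre)]
  apply hq
  rw [← hrq, hb]
  exact hstep

lemma backshift (M : TabooTree X) (r : List X) (b : X)
    (hqT : r ++ [b] ∈ M.T) (hodd : Odd r.length)
    (h : TabooDetermined M false (r ++ [b])) : TabooDetermined M false r := by
  obtain ⟨s, hs1, hs2, hs3⟩ := h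
  classical
  set q : List X := r ++ [b] with hqdef
  set s' : List X → X := fun p => if p.length = r.length then b else s p with hs'def
  have hql : q.length = r.length + 1 := by simp [hqdef]
  have hrq : r <+: q := List.prefix_append _ _
  have step : ∀ p : List X, p ∈ M.T → r <+: p → r.length < p.length →
      PosConsistentFrom false s' r.length p →
      q <+: p ∧ PosConsistentFrom false s q.length p := by
    intro p hpT hrp hlt hc
    have htake : p.take r.length = r := take_of_prefix hrp
    have hget : p.get ⟨r.length, hlt⟩ = b := by
      have h1 := hc r.length hlt le_rfl (turnF.mpr hodd)
      rw [htake] at h1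
      simpa [hs'def] using h1
    have hqp : q <+: p := by
      have h1 : p.take (r.length + 1) = p.take r.length ++ [p.get ⟨r.length, hlt⟩] := by
        rw [List.take_succ]
        simp [List.getElem?_eq_getElem hlt]
      have h2 : p.take (r.length + 1) = q := by rw [h1, htake, hget]
      rw [← h2]
      exact List.take_prefix _ _
    refine ⟨hqp, fun k hk hle ht => ?_⟩
    have h1 := hc k hk (by omega) ht
    rw [h1]
    have h2 : (p.take k).length = k := by rw [List.length_take]; omega
    rw [hs'def]
    simp only []
    rw [if_neg (by omega)]
  refine ⟨s', ?_, ?_, ?_⟩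
  · intro p hp hnt ht hlen hc
    rcases Nat.lt_or_ge r.length p.length with hlt | hge
    · have hrp : r <+: p := prefix_of_mem_subtree hp (le_of_lt hlt)
      obtain ⟨hqp, hc'⟩ := step p hp.1 hrp hlt hc
      have hmem : p ∈ subtreeAt M.T q := mem_subtree hp.1 hqp
      have hnt' : ¬ IsTerminal (subtreeAt M.T q) p := not_terminal_mono hrq hqp hp.1 hnt
      have h1 := hs1 p hmem hnt' ht (by omega) hc'
      have hs'p : s' p = s p := by rw [hs'def]; simp only []; rw [if_neg (by omega)]
      rw [hs'p]
      exact ⟨h1.1, Or.inr (hrp.trans (List.prefix_append _ _))⟩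
    · have hpr : p = r := eq_of_mem_subtree hp (le_antisymm hge hlen)
      subst hpr
      have hs'p : s' p = b := by simp [hs'def]
      rw [hs'p]
      exact ⟨hqT, Or.inr hrq⟩
  · intro p hterm hrp hc
    have hpT : p ∈ M.T := hterm.1.1
    have hlt : r.length < p.length := by
      rcases Nat.lt_or_ge r.length p.length with h | h
      · exact h
      · exfalso
        have hpr : p = r := eq_of_mem_subtree hterm.1 (le_antisymm h hrp.length_le)
        subst hpr
        exact hterm.2 b ⟨hqT, Or.inr (List.prefix_append _ _)⟩
    obtain ⟨hqp, hc'⟩ := step p hpT hrp hlt hc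
    have hterm' : IsTerminal (subtreeAt M.T q) p :=
      ⟨mem_subtree hpT hqp, fun a ha =>
        hterm.2 a ⟨ha.1, Or.inr ((hrq.trans hqp).trans (List.prefix_append _ _))⟩⟩
    have h1 := hs2 p hterm' hqp hc'
    simpa using h1
  · intro x hx hc
    have h0 : prefixFn x r.length = r :=
      eq_of_mem_subtree (hx r.length) (prefixFn_length x r.length)
    have hb : x r.length = b := by
      have h1 := hc r.length le_rfl (turnF.mpr hodd)
      rw [h0] at h1
      simpa [hs'def] using h1
    have h1 : prefixFn x q.length = q := by
      rw [hql, prefixFn_succ, h0, hb]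
    have hbody : x ∈ body (subtreeAt M.T q) := by
      intro n
      refine ⟨(hx n).1, ?_⟩
      rcases le_or_gt n q.length with h2 | h2
      · exact Or.inl (by rw [← h1]; exact prefixFn_prefix x h2)
      · exact Or.inr (by rw [← h1]; exact prefixFn_prefix x (le_of_lt h2))
    apply hs3 x hbody
    intro k hk ht
    have h2 := hc k (by omega) ht
    rw [h2, hs'def]
    simp only []
    rw [if_neg (by rw [prefixFn_length]; omega)]

lemma noTDII (M : TabooTree X) {T' : Set (List X)}
    (hT' : T' = {q | q ∈ M.T ∧ ¬ TabooDetermined M true q ∧ ¬ TabooDetermined M false q})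
    {q : List X} (hq : q ∉ T') (hmin : ∀ r, r <+: q → r ≠ q → r ∈ T')
    (hqT : q ∈ M.T) (heven : Even q.length) (hne : q ≠ []) :
    ¬ TabooDetermined M false q := by
  intro hTD
  have hrq : q.dropLast ++ [q.getLast hne] = q := List.dropLast_append_getLast hne
  have h0 : 0 < q.length := List.length_pos_iff.mpr hne
  have hlen : q.dropLast.length + 1 = q.length := by rw [List.length_dropLast]; omega
  have hpre : q.dropLast <+: q := ⟨_, hrq⟩
  have hneq : q.dropLast ≠ q := by
    intro h
    have := congrArg List.length h
    omega
  have hrT : q.dropLast ∈ T' := hmin _ hpre hneq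
  have hodd : Odd q.dropLast.length := by
    rw [← Nat.not_even_iff_odd]
    intro h
    rw [← hlen, Nat.even_add_one] at heven
    exact heven h
  have hbd := backshift M q.dropLast (q.getLast hne) (by rw [hrq]; exact hqT) hodd
    (by rw [hrq]; exact hTD)
  rw [hT'] at hrT
  exact hrT.2.2 hbd

end Aux
/-- if `σ'` is a winning strategy for player I in `G(A ∩ [T']; T')`, where
`T'` consists of the positions not taboo-determined for either player, then any strategy
`σ` that follows `σ'` while the play remains in `T'` and, upon first entering a position
`q` taboo-determined for I, switches to a taboo-strategy for `M_q`, is a winning strategy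
for I in `G(A; M)`; moreover in a play consistent with `σ`, player II is never the first
to enter a position taboo-determined for II. -/
theorem stmt3 {X : Type*} (M : TabooTree X) (A : Set (ℕ → X))
    (T' : Set (List X))
    (hT' : T' = {q | q ∈ M.T ∧ ¬ TabooDetermined M true q ∧ ¬ TabooDetermined M false q})
    (hroot : ([] : List X) ∈ T')
    (σ' : List X → X) (hσ' : WinsI T' ∅ (A ∩ body T') σ')
    (τ : List X → (List X → X))
    (hτ : ∀ q, TabooDetermined M true q → IsTabooStrategyAt M true q (τ q))
    (σ : List X → X)
    (hfollow : ∀ p ∈ T', Turn true p.length → σ p = σ' p)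
    (hswitch : ∀ q : List X, q ∉ T' → (∀ r, r <+: q → r ≠ q → r ∈ T') →
        TabooDetermined M true q →
        ∀ p ∈ M.T, q <+: p → Turn true p.length → σ p = τ q p) :
    WinsI M.T M.tabooII A σ ∧
    (∀ p ∈ M.T, PosConsistent true σ p →
      ∀ q : List X, q <+: p → q ∉ T' → (∀ r, r <+: q → r ≠ q → r ∈ T') →
        Even q.length → q ≠ [] → ¬ TabooDetermined M false q) := by
  have hsub : T' ⊆ M.T := by
    rw [hT']; intro a ha; exact ha.1
  have key : ∀ q : List X, q ∉ T' → (∀ r, r <+: q → r ≠ q → r ∈ T') → q ∈ M.T →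
      PosConsistent true σ q → TabooDetermined M true q := by
    intro q hq hmin hqT hc
    have hne : q ≠ [] := by rintro rfl; exact hq hroot
    have heven : Even q.length := exit_even hσ'.1 hσ'.2.1 hfollow hq hne hmin hc
    have hnf : ¬ TabooDetermined M false q := noTDII M hT' hq hmin hqT heven hne
    by_contra hnt
    apply hq
    rw [hT']
    exact ⟨hqT, hnt, hnf⟩
  have tau_cons : ∀ q : List X, q ∉ T' → (∀ r, r <+: q → r ≠ q → r ∈ T') →
      TabooDetermined M true q → ∀ p ∈ M.T, q <+: p → PosConsistent true σ p →
      PosConsistentFrom true (τ q) q.length p := by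
    intro q hq hmin hTD p hpT hqp hc k hk hle ht
    have h1 := hc k hk ht
    rw [h1]
    have hlen : (p.take k).length = k := by rw [List.length_take]; omega
    exact hswitch q hq hmin hTD (p.take k) (M.isTree.2 hpT (List.take_prefix _ _))
      (prefix_take_of_le hqp hle) (by rw [hlen]; exact ht)
  have consT : ∀ p : List X, (∀ n, p.take n ∈ T') → PosConsistent true σ p →
      PosConsistent true σ' p := by
    intro p hall hc k hk tk
    have hlt : (p.take k).length = k := by rw [List.length_take]; omega
    rw [hc k hk tk, hfollow (p.take k) (hall k) (by rw [hlt]; exact tk)]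
  refine ⟨⟨?_, ?_, ?_⟩, ?_⟩
  · -- IsStrategy M.T true σ
    intro p hpT hnt ht hc
    by_cases hall : ∀ n, p.take n ∈ T'
    · have hpT' : p ∈ T' := by have h1 := hall p.length; rwa [List.take_length] at h1
      have hc' : PosConsistent true σ' p := consT p hall hc
      have hnt' : ¬ IsTerminal T' p := fun h => absurd (hσ'.2.1 p h hc') (Set.notMem_empty p)
      have h1 := hσ'.1 p hpT' hnt' ht hc'
      rw [hfollow p hpT' ht]
      exact hsub h1
    · push_neg at hall
      obtain ⟨q, hqp, hq, hmin⟩ := firstExit hall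
      have hqT : q ∈ M.T := M.isTree.2 hpT hqp
      have hTD := key q hq hmin hqT (posConsistent_of_prefix hc hqp)
      have hcf := tau_cons q hq hmin hTD p hpT hqp hc
      have hnt' : ¬ IsTerminal (subtreeAt M.T q) p := by
        intro h
        obtain ⟨a, ha⟩ := exists_ext hpT hnt
        exact h.2 a (mem_subtree ha (hqp.trans (List.prefix_append _ _)))
      have h1 := (hτ q hTD).1 p (mem_subtree hpT hqp) hnt' ht hqp.length_le hcf
      rw [hswitch q hq hmin hTD p hpT hqp ht]
      exact h1.1
  · -- terminal positions
    intro p hterm hc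
    have hpT := hterm.1
    by_cases hall : ∀ n, p.take n ∈ T'
    · exfalso
      have hpT' : p ∈ T' := by have h1 := hall p.length; rwa [List.take_length] at h1
      have hc' : PosConsistent true σ' p := consT p hall hc
      have hterm' : IsTerminal T' p := ⟨hpT', fun a ha => hterm.2 a (hsub ha)⟩
      exact absurd (hσ'.2.1 p hterm' hc') (Set.notMem_empty p)
    · push_neg at hall
      obtain ⟨q, hqp, hq, hmin⟩ := firstExit hall
      have hqT : q ∈ M.T := M.isTree.2 hpT hqp
      have hTD := key q hq hmin hqT (posConsistent_of_prefix hc hqp)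
      have hcf := tau_cons q hq hmin hTD p hpT hqp hc
      have hterm' : IsTerminal (subtreeAt M.T q) p := terminal_subtree hterm hqp
      have h1 := (hτ q hTD).2.1 p hterm' hqp hcf
      simpa using h1
  · -- infinite plays
    intro x hx hc
    by_cases hall : ∀ n, prefixFn x n ∈ T'
    · have hc' : BranchConsistent true σ' x := by
        intro k tk
        rw [hc k tk, hfollow (prefixFn x k) (hall k) (by rw [prefixFn_length]; exact tk)]
      exact (hσ'.2.2 x hall hc').1
    · push_neg at hall
      obtain ⟨n, hn⟩ := hall
      have hpl : (prefixFn x n).length = n := prefixFn_length x n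
      obtain ⟨q, hqp, hq, hmin⟩ := firstExit (p := prefixFn x n)
        ⟨n, by rw [List.take_of_length_le hpl.le]; exact hn⟩
      obtain ⟨m, rfl⟩ : ∃ m, q = prefixFn x m := by
        refine ⟨q.length, ?_⟩
        have h1 := take_of_prefix hqp
        rw [prefixFn_take x (by rw [← hpl]; exact hqp.length_le)] at h1
        exact h1.symm
      have hqT : prefixFn x m ∈ M.T := hx m
      have hTD := key _ hq hmin hqT (branch_pos_cons hc m)
      have hbc : BranchConsistentFrom true (τ (prefixFn x m)) (prefixFn x m).length x := by
        intro k hk tk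
        rw [prefixFn_length] at hk
        rw [hc k tk]
        exact hswitch _ hq hmin hTD (prefixFn x k) (hx k) (prefixFn_prefix x hk)
          (by rw [prefixFn_length]; exact tk)
      have hbody : x ∈ body (subtreeAt M.T (prefixFn x m)) := by
        intro n'
        refine ⟨hx n', ?_⟩
        rcases le_or_gt n' m with h2 | h2
        · exact Or.inl (prefixFn_prefix x h2)
        · exact Or.inr (prefixFn_prefix x (le_of_lt h2))
      exact absurd hbc ((hτ _ hTD).2.2 x hbody)
  · -- moreover
    intro p hpT _hc q hqp hq hmin heven hne
    exact noTDII M hT' hq hmin (M.isTree.2 hpT hqp) heven hne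
end

section
/- Let ⟨T̃, π, φ⟩ be a covering of a game tree with taboos T, and let A ⊆ [T]. If σ̃ is a winning strategy for player I in G(π⁻¹(A); T̃), then φ(σ̃) is a winning strategy for player I in G(A; T). -/
universe u v

/-- A play of a game tree: either a finite play (a terminal position) or an infinite play. -/
inductive Play (X : Type*) where
  | fin : List X → Play X
  | inf : (ℕ → X) → Play X

/-- `x` is a play of the tree `T`. -/
def IsPlay {X : Type*} (T : Set (List X)) : Play X → Prop
  | .fin p => IsTerminal T p
  | .inf x => x ∈ body T

/-- A play is consistent with the strategy `σ` of player `pl`. -/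
def PlayConsistent {X : Type*} (pl : Bool) (σ : List X → X) : Play X → Prop
  | .fin p => PosConsistent pl σ p
  | .inf x => BranchConsistent pl σ x

/-- A play is a taboo for player `pl`. -/
def PlayTabooFor {X : Type*} (M : TabooTree X) (pl : Bool) : Play X → Prop
  | .fin p => p ∈ (if pl then M.tabooI else M.tabooII)
  | .inf _ => False

/-- A play is an initial segment of another. -/
def Play.le {X : Type*} : Play X → Play X → Prop
  | .fin p, .fin q => p <+: q
  | .fin p, .inf x => p = prefixFn x p.length
  | .inf _, .fin _ => False
  | .inf x, .inf y => x = y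

/-- The map on infinite sequences induced by a monotone, length-preserving map on positions. -/
noncomputable def bodyMap {X Y : Type*} [Nonempty X] (π : List Y → List X)
    (x : ℕ → Y) : ℕ → X :=
  fun n => (π (prefixFn x (n + 1))).getD n (Classical.arbitrary X)

/-- The map on plays induced by a position map. -/
noncomputable def Play.map {X Y : Type*} [Nonempty X] (π : List Y → List X) :
    Play Y → Play X
  | .fin p => .fin (π p)
  | .inf x => .inf (bodyMap π x)


/-- A covering of the game tree with taboos `M` by the game tree with taboos `Tc`:
a position map `π` (monotone, length-preserving, and pulling taboos back to taboos for the
same player) and a strategy map `φ` (mapping strategies to strategies for the same player,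
with finite dependence on its argument) satisfying the lifting condition. -/
structure Covering {X Y : Type*} [Nonempty X] (Tc : TabooTree Y) (M : TabooTree X) where
  π : List Y → List X
  π_maps : ∀ p ∈ Tc.T, π p ∈ M.T
  π_mono : ∀ p q : List Y, p ∈ Tc.T → q ∈ Tc.T → p <+: q → π p <+: π q
  π_len : ∀ p ∈ Tc.T, (π p).length = p.length
  π_tabooI : ∀ p ∈ Tc.T, π p ∈ M.tabooI → p ∈ Tc.tabooI
  π_tabooII : ∀ p ∈ Tc.T, π p ∈ M.tabooII → p ∈ Tc.tabooII
  φ : Bool → (List Y → Y) → (List X → X)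
  φ_strategy : ∀ pl σ, IsStrategy Tc.T pl σ → IsStrategy M.T pl (φ pl σ)
  φ_local : ∀ (pl : Bool) (n : ℕ) (σ σ' : List Y → Y),
      (∀ p : List Y, p.length < n → σ p = σ' p) →
      ∀ q : List X, q.length < n → φ pl σ q = φ pl σ' q
  lifting : ∀ (pl : Bool) (σ : List Y → Y), IsStrategy Tc.T pl σ →
      ∀ x : Play X, IsPlay M.T x → PlayConsistent pl (φ pl σ) x →
        ∃ xt : Play Y, IsPlay Tc.T xt ∧ PlayConsistent pl σ xt ∧
          Play.le (Play.map π xt) x ∧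
          (Play.map π xt = x ∨ PlayTabooFor Tc pl xt)


/-- if `σt` is a winning strategy for player I in `G(π⁻¹(A); Tc)`, then
`φ(σt)` is a winning strategy for player I in `G(A; M)`. -/
theorem stmt4 {X Y : Type*} [Nonempty X] (M : TabooTree X) (Tc : TabooTree Y)
    (C : Covering Tc M) (A : Set (ℕ → X)) (hA : A ⊆ body M.T)
    (σt : List Y → Y)
    (hwin : WinsI Tc.T Tc.tabooII (bodyMap C.π ⁻¹' A) σt) :
    WinsI M.T M.tabooII A (C.φ true σt) := by
  obtain ⟨hstrat, hfin, hinf⟩ := hwin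
  refine ⟨C.φ_strategy true σt hstrat, ?_, ?_⟩
  · intro p hterm hcons
    obtain ⟨xt, hplay, hc, hle, hcase⟩ :=
      C.lifting true σt hstrat (.fin p) hterm hcons
    -- the taboo case is impossible: xt would be a terminal position in tabooI,
    -- but winning gives tabooII
    have hnt : ¬ PlayTabooFor Tc true xt := by
      intro htab
      cases xt with
      | fin q =>
        have hII : q ∈ Tc.tabooII := hfin q hplay hc
        simp only [PlayTabooFor, if_true] at htab
        exact Tc.taboo_disjoint.ne_of_mem htab hII rfl
      | inf y => exact htab
    have heq : Play.map C.π xt = Play.fin p := hcase.resolve_right hnt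
    cases xt with
    | inf y => simp [Play.map] at heq
    | fin q =>
      simp only [Play.map, Play.fin.injEq] at heq
      have hqT : q ∈ Tc.T := hplay.1
      have hII : q ∈ Tc.tabooII := hfin q hplay hc
      rcases M.taboo_cover p hterm with hI | hII'
      · exact absurd (C.π_tabooI q hqT (heq ▸ hI))
          (fun h => Tc.taboo_disjoint.ne_of_mem h hII rfl)
      · exact hII'
  · intro x hx hcons
    obtain ⟨xt, hplay, hc, hle, hcase⟩ :=
      C.lifting true σt hstrat (.inf x) hx hcons
    have hnt : ¬ PlayTabooFor Tc true xt := by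
      intro htab
      cases xt with
      | fin q =>
        have hII : q ∈ Tc.tabooII := hfin q hplay hc
        simp only [PlayTabooFor, if_true] at htab
        exact Tc.taboo_disjoint.ne_of_mem htab hII rfl
      | inf y => exact htab
    have heq : Play.map C.π xt = Play.inf x := hcase.resolve_right hnt
    cases xt with
    | fin q => simp [Play.map] at heq
    | inf y =>
      simp only [Play.map, Play.inf.injEq] at heq
      have : y ∈ bodyMap C.π ⁻¹' A := hinf y hplay hc
      exact heq ▸ this
end

section
/- Let ⟨T̃, π, φ⟩ be a covering of a game tree with taboos T, and let A ⊆ [T]. If τ̃ is a winning strategy for player II in G(π⁻¹(A); T̃), then φ(τ̃) is a winning strategy for player II in G(A; T). -/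
universe u v

/-- if `τt` is a winning strategy for player II in `G(π⁻¹(A); Tc)`, then
`φ(τt)` is a winning strategy for player II in `G(A; M)`. -/
theorem stmt5 {X Y : Type*} [Nonempty X] (M : TabooTree X) (Tc : TabooTree Y)
    (C : Covering Tc M) (A : Set (ℕ → X)) (hA : A ⊆ body M.T)
    (τt : List Y → Y)
    (hwin : WinsII Tc.T Tc.tabooI (bodyMap C.π ⁻¹' A) τt) :
    WinsII M.T M.tabooI A (C.φ false τt) := by
  obtain ⟨hstrat, hfin, hinf⟩ := hwin
  refine ⟨C.φ_strategy false τt hstrat, ?_, ?_⟩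
  · intro p hterm hcons
    obtain ⟨xt, hplay, hpc, hle, hor⟩ :=
      C.lifting false τt hstrat (.fin p) hterm hcons
    cases xt with
    | inf y => exact absurd hle (by simp [Play.map, Play.le])
    | fin q =>
      have hqI : q ∈ Tc.tabooI := hfin q hplay hpc
      rcases hor with heq | htab
      · have hπq : C.π q = p := by simpa [Play.map, Play.fin.injEq] using heq
        have hπterm : IsTerminal M.T (C.π q) := hπq ▸ hterm
        rcases M.taboo_cover _ hπterm with h | h
        · exact hπq ▸ h
        · exact absurd hqI (Set.disjoint_right.mp Tc.taboo_disjoint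
            (C.π_tabooII q hplay.1 h))
      · exact absurd (show q ∈ Tc.tabooII from htab)
          (Set.disjoint_left.mp Tc.taboo_disjoint hqI)
  · intro x hx hcons hxA
    obtain ⟨xt, hplay, hpc, hle, hor⟩ :=
      C.lifting false τt hstrat (.inf x) hx hcons
    cases xt with
    | fin q =>
      have hqI : q ∈ Tc.tabooI := hfin q hplay hpc
      rcases hor with heq | htab
      · exact absurd heq (by simp [Play.map])
      · exact Set.disjoint_left.mp Tc.taboo_disjoint hqI htab
    | inf y =>
      have hyx : bodyMap C.π y = x := hle
      exact hinf y hplay hpc (by simpa [Set.mem_preimage, hyx] using hxA)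
end

section
/- Let ((T_i)_{i∈ℕ}, (C_{j,i})_{i≤j}) be an inverse system where each C_{j,i} = ⟨T_j, π_{j,i}, φ_{j,i}⟩ is a k-covering of T_i, with C_{i₃,i₁} = C_{i₂,i₁} ∘ C_{i₃,i₂} for i₁ ≤ i₂ ≤ i₃, and suppose for every n there is i_n such that C_{j',j} is an n-covering for all j' ≥ j ≥ i_n. Then there exist a game tree with taboos T_∞ and k-coverings C_{∞,i} of each T_i such that C_{∞,i} = C_{j,i} ∘ C_{∞,j} for all i ≤ j. -/
universe u v

/-- A `k`-covering: the two trees (and their taboos) agree on all positions of length ≤ `k`,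
and the position and strategy maps are the identity up to level `k`. -/
def IsKCovering {X : Type*} [Nonempty X] {Tc M : TabooTree X} (k : ℕ)
    (C : Covering Tc M) : Prop :=
  (∀ p : List X, p.length ≤ k → (p ∈ Tc.T ↔ p ∈ M.T)) ∧
  (∀ p : List X, p.length ≤ k → (p ∈ Tc.tabooI ↔ p ∈ M.tabooI)) ∧
  (∀ p : List X, p.length ≤ k → (p ∈ Tc.tabooII ↔ p ∈ M.tabooII)) ∧
  (∀ p ∈ Tc.T, p.length ≤ k → C.π p = p) ∧
  (∀ (pl : Bool) (σ : List X → X) (p : List X), p.length < k → C.φ pl σ p = σ p)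


-- PART A: generic helpers
namespace Stmt9Aux

lemma prefixFn_length {X : Type u} (x : ℕ → X) (n : ℕ) : (prefixFn x n).length = n := by
  simp [prefixFn]

lemma prefixFn_getElem {X : Type u} (x : ℕ → X) {n m : ℕ} (h : m < (prefixFn x n).length) :
    (prefixFn x n)[m] = x m := by
  simp [prefixFn]

lemma prefixFn_take {X : Type u} (x : ℕ → X) {m n : ℕ} (h : m ≤ n) :
    (prefixFn x n).take m = prefixFn x m := by
  apply List.ext_getElem
  · simp [prefixFn_length]; omega
  · intro i h1 h2
    rw [List.getElem_take, prefixFn_getElem, prefixFn_getElem]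

lemma prefixFn_prefix {X : Type u} (x : ℕ → X) {m n : ℕ} (h : m ≤ n) :
    prefixFn x m <+: prefixFn x n := by
  rw [List.prefix_iff_eq_take, prefixFn_length, prefixFn_take x h]

lemma prefixFn_getD {X : Type u} (x : ℕ → X) (m : ℕ) (d : X) :
    (prefixFn x (m + 1)).getD m d = x m := by
  rw [List.getD_eq_getElem _ _ (by simp [prefixFn_length]), prefixFn_getElem]

lemma eq_prefixFn_of_prefix {X : Type u} {p : List X} {x : ℕ → X} {n : ℕ}
    (h : p <+: prefixFn x n) : p = prefixFn x p.length := by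
  have hl : p.length ≤ n := by simpa [prefixFn_length] using h.length_le
  rw [List.prefix_iff_eq_take, prefixFn_take x hl] at h
  exact h

lemma mem_of_prefixFn_prefix {X : Type u} {T : Set (List X)} (hT : IsGameTree T)
    {x : ℕ → X} (hx : x ∈ body T) {p : List X} {n : ℕ} (h : p <+: prefixFn x n) : p ∈ T :=
  hT.2 (hx n) h

lemma Playle_trans {X : Type u} {a b c : Play X} (h1 : Play.le a b) (h2 : Play.le b c) :
    Play.le a c := by
  cases a with
  | fin p =>
    cases b with
    | fin q =>
      cases c with
      | fin r => exact h1.trans h2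
      | inf z =>
        show p = prefixFn z p.length
        simp only [Play.le] at h1 h2
        rw [h2] at h1
        exact eq_prefixFn_of_prefix h1
    | inf z =>
      cases c with
      | fin r => exact absurd h2 (by simp [Play.le])
      | inf w => simp only [Play.le] at h1 h2 ⊢; rwa [← h2]
  | inf x =>
    cases b with
    | fin q => exact absurd h1 (by simp [Play.le])
    | inf z =>
      cases c with
      | fin r => exact absurd h2 (by simp [Play.le])
      | inf w => simp only [Play.le] at h1 h2 ⊢; rw [h1, h2]

end Stmt9Aux
namespace Stmt9Aux

/-- The positions of a play lie in the tree `T`. -/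
def InTree {X : Type u} (T : Set (List X)) : Play X → Prop
  | .fin p => p ∈ T
  | .inf x => x ∈ body T

lemma isPlay_inTree {X : Type u} {T : Set (List X)} {y : Play X} (h : IsPlay T y) :
    InTree T y := by
  cases y with
  | fin p => exact h.1
  | inf x => exact h

variable {X : Type u} [Nonempty X]

lemma map_prefixFn {T : Set (List X)} {π : List X → List X}
    (hmono : ∀ p q : List X, p ∈ T → q ∈ T → p <+: q → π p <+: π q)
    (hlen : ∀ p ∈ T, (π p).length = p.length)
    {x : ℕ → X} (hx : x ∈ body T) (n : ℕ) :
    π (prefixFn x n) = prefixFn (bodyMap π x) n := by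
  apply List.ext_getElem
  · rw [hlen _ (hx n), prefixFn_length, prefixFn_length]
  · intro i h1 h2
    have hi : i < n := by simpa [prefixFn_length] using h2
    have hpre : π (prefixFn x (i+1)) <+: π (prefixFn x n) :=
      hmono _ _ (hx _) (hx _) (prefixFn_prefix x hi)
    have hli : i < (π (prefixFn x (i+1))).length := by
      rw [hlen _ (hx _), prefixFn_length]; omega
    rw [prefixFn_getElem, ← hpre.getElem hli]
    show (π (prefixFn x (i+1)))[i] = bodyMap π x i
    rw [bodyMap, List.getD_eq_getElem _ _ hli]

lemma bodyMap_mem_body {T T' : Set (List X)} {π : List X → List X}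
    (hmaps : ∀ p ∈ T', π p ∈ T)
    (hmono : ∀ p q : List X, p ∈ T' → q ∈ T' → p <+: q → π p <+: π q)
    (hlen : ∀ p ∈ T', (π p).length = p.length)
    {x : ℕ → X} (hx : x ∈ body T') : bodyMap π x ∈ body T := fun n => by
  rw [← map_prefixFn hmono hlen hx n]; exact hmaps _ (hx n)

lemma le_map {T' : Set (List X)} (hT' : IsGameTree T') {π : List X → List X}
    (hmono : ∀ p q : List X, p ∈ T' → q ∈ T' → p <+: q → π p <+: π q)
    (hlen : ∀ p ∈ T', (π p).length = p.length)
    {y z : Play X} (hz : InTree T' z) (hle : Play.le y z) :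
    Play.le (Play.map π y) (Play.map π z) := by
  cases y with
  | fin p =>
    cases z with
    | fin q =>
      exact hmono _ _ (hT'.2 hz hle) hz hle
    | inf x =>
      show π p = prefixFn (bodyMap π x) (π p).length
      have hp : p ∈ T' := by
        rw [hle]; exact hz p.length
      rw [hlen _ hp, ← map_prefixFn hmono hlen hz p.length]
      exact congrArg π hle
  | inf x =>
    cases z with
    | fin q => exact absurd hle (by simp [Play.le])
    | inf w =>
      show bodyMap π x = bodyMap π w
      exact congrArg _ hle

lemma map_comp {T : Set (List X)} {π1 π2 π3 : List X → List X}
    (hcomp : ∀ p ∈ T, π3 p = π1 (π2 p))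
    (hmono2 : ∀ p q : List X, p ∈ T → q ∈ T → p <+: q → π2 p <+: π2 q)
    (hlen2 : ∀ p ∈ T, (π2 p).length = p.length)
    {y : Play X} (hy : InTree T y) :
    Play.map π3 y = Play.map π1 (Play.map π2 y) := by
  cases y with
  | fin p => show Play.fin _ = Play.fin _; rw [hcomp p hy]
  | inf x =>
    show Play.inf _ = Play.inf _
    congr 1
    funext n
    show bodyMap π3 x n = bodyMap π1 (bodyMap π2 x) n
    unfold bodyMap
    rw [hcomp _ (hy (n+1)), map_prefixFn hmono2 hlen2 hy (n+1)]
    rfl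

end Stmt9Aux
namespace Stmt9Aux

/-- An inverse system of coverings with a stabilization function. -/
structure InvSys (X : Type u) [Nonempty X] where
  M : ℕ → TabooTree X
  C : ∀ i j : ℕ, i ≤ j → Covering (M j) (M i)
  Nf : ℕ → ℕ
  mono : Monotone Nf
  compπ : ∀ (i j l : ℕ) (hij : i ≤ j) (hjl : j ≤ l), ∀ p ∈ (M l).T,
    (C i l (hij.trans hjl)).π p = (C i j hij).π ((C j l hjl).π p)
  compφ : ∀ (i j l : ℕ) (hij : i ≤ j) (hjl : j ≤ l) (pl : Bool) (σ : List X → X),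
    (C i l (hij.trans hjl)).φ pl σ = (C i j hij).φ pl ((C j l hjl).φ pl σ)
  stab : ∀ (n j j' : ℕ) (h : j ≤ j'), Nf n ≤ j → IsKCovering n (C j j' h)

variable {X : Type u} [Nonempty X] (S : InvSys X)

/-- The tree of the inverse limit. -/
def InvSys.Tinf : Set (List X) := {p | ∀ j, S.Nf p.length ≤ j → p ∈ (S.M j).T}

def InvSys.tbI : Set (List X) := {p | ∀ j, S.Nf p.length ≤ j → p ∈ (S.M j).tabooI}

def InvSys.tbII : Set (List X) := {p | ∀ j, S.Nf p.length ≤ j → p ∈ (S.M j).tabooII}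

lemma InvSys.memAgree {n j j' : ℕ} (hj : S.Nf n ≤ j) (hj' : S.Nf n ≤ j')
    {p : List X} (hp : p.length ≤ n) : p ∈ (S.M j).T ↔ p ∈ (S.M j').T := by
  rcases le_total j j' with h | h
  · exact ((S.stab n j j' h hj).1 p hp).symm
  · exact (S.stab n j' j h hj').1 p hp

lemma InvSys.tbIAgree {n j j' : ℕ} (hj : S.Nf n ≤ j) (hj' : S.Nf n ≤ j')
    {p : List X} (hp : p.length ≤ n) : p ∈ (S.M j).tabooI ↔ p ∈ (S.M j').tabooI := by
  rcases le_total j j' with h | h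
  · exact ((S.stab n j j' h hj).2.1 p hp).symm
  · exact (S.stab n j' j h hj').2.1 p hp

lemma InvSys.tbIIAgree {n j j' : ℕ} (hj : S.Nf n ≤ j) (hj' : S.Nf n ≤ j')
    {p : List X} (hp : p.length ≤ n) : p ∈ (S.M j).tabooII ↔ p ∈ (S.M j').tabooII := by
  rcases le_total j j' with h | h
  · exact ((S.stab n j j' h hj).2.2.1 p hp).symm
  · exact (S.stab n j' j h hj').2.2.1 p hp

lemma InvSys.mem_iff {j : ℕ} {p : List X} (hj : S.Nf p.length ≤ j) :
    p ∈ S.Tinf ↔ p ∈ (S.M j).T := by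
  constructor
  · intro h; exact h j hj
  · intro h j' hj'
    exact (S.memAgree hj hj' le_rfl).mp h

lemma InvSys.tbI_iff {j : ℕ} {p : List X} (hj : S.Nf p.length ≤ j) :
    p ∈ S.tbI ↔ p ∈ (S.M j).tabooI := by
  constructor
  · intro h; exact h j hj
  · intro h j' hj'
    exact (S.tbIAgree hj hj' le_rfl).mp h

lemma InvSys.tbII_iff {j : ℕ} {p : List X} (hj : S.Nf p.length ≤ j) :
    p ∈ S.tbII ↔ p ∈ (S.M j).tabooII := by
  constructor
  · intro h; exact h j hj
  · intro h j' hj'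
    exact (S.tbIIAgree hj hj' le_rfl).mp h

lemma InvSys.Tinf_tree : IsGameTree S.Tinf := by
  constructor
  · refine ⟨[], fun j _ => ?_⟩
    obtain ⟨⟨q, hq⟩, hcl⟩ := (S.M j).isTree
    exact hcl hq List.nil_prefix
  · intro p q hq hpq
    intro j hj
    have hlen : p.length ≤ q.length := hpq.length_le
    have hq' : q ∈ (S.M (max j (S.Nf q.length))).T := hq _ (le_max_right _ _)
    have hp' : p ∈ (S.M (max j (S.Nf q.length))).T := (S.M _).isTree.2 hq' hpq
    exact (S.memAgree (le_trans hj (le_max_left _ _)) hj le_rfl).mp hp'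

/-- The extension of a position `p++[a]` is not in `Tinf` iff it is missing in some big level. -/
lemma InvSys.ext_notMem {p : List X} {a : X} {j : ℕ} (hj : S.Nf (p.length + 1) ≤ j)
    (h : p ++ [a] ∉ (S.M j).T) : p ++ [a] ∉ S.Tinf := by
  intro hmem
  exact h ((S.mem_iff (by simpa using hj)).mp hmem)

/-- The inverse limit tree with taboos. -/
noncomputable def InvSys.Minf : TabooTree X where
  T := S.Tinf
  isTree := S.Tinf_tree
  tabooI := S.tbI
  tabooII := S.tbII
  tabooI_terminal := by
    intro p hp
    have hj1 : S.Nf p.length ≤ max (S.Nf p.length) (S.Nf (p.length + 1)) := le_max_left _ _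
    constructor
    · intro j hj
      exact ((S.M j).tabooI_terminal p (hp j hj)).1
    · intro a hmem
      have h1 : IsTerminal (S.M (max (S.Nf p.length) (S.Nf (p.length + 1)))).T p :=
        (S.M _).tabooI_terminal p (hp _ hj1)
      have hj2 : S.Nf ((p ++ [a]).length) ≤ max (S.Nf p.length) (S.Nf (p.length + 1)) := by
        simp only [List.length_append, List.length_singleton]
        exact le_max_right _ _
      exact h1.2 a ((S.mem_iff hj2).mp hmem)
  tabooII_terminal := by
    intro p hp
    have hj1 : S.Nf p.length ≤ max (S.Nf p.length) (S.Nf (p.length + 1)) := le_max_left _ _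
    constructor
    · intro j hj
      exact ((S.M j).tabooII_terminal p (hp j hj)).1
    · intro a hmem
      have h1 : IsTerminal (S.M (max (S.Nf p.length) (S.Nf (p.length + 1)))).T p :=
        (S.M _).tabooII_terminal p (hp _ hj1)
      have hj2 : S.Nf ((p ++ [a]).length) ≤ max (S.Nf p.length) (S.Nf (p.length + 1)) := by
        simp only [List.length_append, List.length_singleton]
        exact le_max_right _ _
      exact h1.2 a ((S.mem_iff hj2).mp hmem)
  taboo_disjoint := by
    rw [Set.disjoint_left]
    intro p h1 h2
    exact Set.disjoint_left.mp (S.M (S.Nf p.length)).taboo_disjoint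
      (h1 _ le_rfl) (h2 _ le_rfl)
  taboo_cover := by
    intro p hterm
    have hj1 : S.Nf p.length ≤ max (S.Nf p.length) (S.Nf (p.length + 1)) := le_max_left _ _
    have hterm' : IsTerminal (S.M (max (S.Nf p.length) (S.Nf (p.length + 1)))).T p := by
      constructor
      · exact hterm.1 _ hj1
      · intro a hmem
        have hj2 : S.Nf ((p ++ [a]).length) ≤ max (S.Nf p.length) (S.Nf (p.length + 1)) := by
          simp only [List.length_append, List.length_singleton]
          exact le_max_right _ _
        exact hterm.2 a ((S.mem_iff hj2).mpr hmem)
    rcases (S.M _).taboo_cover p hterm' with h | h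
    · exact Or.inl ((S.tbI_iff hj1).mpr h)
    · exact Or.inr ((S.tbII_iff hj1).mpr h)

end Stmt9Aux
namespace Stmt9Aux

variable {X : Type u} [Nonempty X] (S : InvSys X)

/-- The limit position map. -/
noncomputable def InvSys.πinf (i : ℕ) (p : List X) : List X :=
  (S.C i (max i (S.Nf p.length)) (le_max_left _ _)).π p

/-- The limit strategy map. -/
noncomputable def InvSys.φinf (i : ℕ) (pl : Bool) (σ : List X → X) (q : List X) : X :=
  (S.C i (max i (S.Nf (q.length + 1))) (le_max_left _ _)).φ pl σ q

lemma InvSys.πeq {i l : ℕ} (hil : i ≤ l) {p : List X} (hp : p ∈ S.Tinf)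
    (hl : S.Nf p.length ≤ l) : (S.C i l hil).π p = S.πinf i p := by
  have h0 : max i (S.Nf p.length) ≤ l := max_le hil hl
  have hpl : p ∈ (S.M l).T := hp l hl
  have h1 := S.compπ i (max i (S.Nf p.length)) l (le_max_left _ _) h0 p hpl
  have h2 : (S.C (max i (S.Nf p.length)) l h0).π p = p :=
    (S.stab p.length _ l h0 (le_max_right _ _)).2.2.2.1 p hpl le_rfl
  rw [h2] at h1
  exact h1

lemma InvSys.φeq {i l : ℕ} (hil : i ≤ l) (pl : Bool) (σ : List X → X) (q : List X)
    (hl : S.Nf (q.length + 1) ≤ l) : (S.C i l hil).φ pl σ q = S.φinf i pl σ q := by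
  have h0 : max i (S.Nf (q.length + 1)) ≤ l := max_le hil hl
  have h1 := S.compφ i (max i (S.Nf (q.length + 1))) l (le_max_left _ _) h0 pl σ
  rw [show (S.C i l hil).φ pl σ = (S.C i l ((le_max_left i (S.Nf (q.length+1))).trans h0)).φ pl σ from rfl, h1]
  exact (S.C i _ (le_max_left _ _)).φ_local pl (q.length + 1) _ σ
    (fun r hr => (S.stab (q.length + 1) _ l h0 (le_max_right _ _)).2.2.2.2 pl σ r hr)
    q (Nat.lt_succ_self _)

lemma InvSys.σagree {j : ℕ} {q : List X} (hj : S.Nf (q.length + 1) ≤ j)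
    (pl : Bool) (σ : List X → X) : S.φinf j pl σ q = σ q :=
  (S.stab (q.length + 1) j (max j (S.Nf (q.length + 1))) (le_max_left _ _) hj).2.2.2.2
    pl σ q (Nat.lt_succ_self _)

lemma InvSys.πinf_maps (i : ℕ) : ∀ p ∈ S.Tinf, S.πinf i p ∈ (S.M i).T := fun p hp =>
  (S.C i _ (le_max_left _ _)).π_maps p (hp _ (le_max_right _ _))

lemma InvSys.πinf_len (i : ℕ) : ∀ p ∈ S.Tinf, (S.πinf i p).length = p.length := fun p hp =>
  (S.C i _ (le_max_left _ _)).π_len p (hp _ (le_max_right _ _))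

lemma InvSys.πinf_mono (i : ℕ) : ∀ p q : List X, p ∈ S.Tinf → q ∈ S.Tinf → p <+: q →
    S.πinf i p <+: S.πinf i q := by
  intro p q hp hq hpq
  have hl : p.length ≤ q.length := hpq.length_le
  set l := max i (max (S.Nf p.length) (S.Nf q.length)) with hldef
  have hil : i ≤ l := le_max_left _ _
  have hlp : S.Nf p.length ≤ l := le_trans (le_max_left _ _) (le_max_right _ _)
  have hlq : S.Nf q.length ≤ l := le_trans (le_max_right _ _) (le_max_right _ _)
  rw [← S.πeq hil hp hlp, ← S.πeq hil hq hlq]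
  exact (S.C i l hil).π_mono p q (hp l hlp) (hq l hlq) hpq

lemma InvSys.πinf_tabooI (i : ℕ) : ∀ p ∈ S.Tinf, S.πinf i p ∈ (S.M i).tabooI → p ∈ S.tbI := by
  intro p hp h
  exact (S.tbI_iff (le_max_right i _)).mpr
    ((S.C i _ (le_max_left _ _)).π_tabooI p (hp _ (le_max_right _ _)) h)

lemma InvSys.πinf_tabooII (i : ℕ) : ∀ p ∈ S.Tinf, S.πinf i p ∈ (S.M i).tabooII → p ∈ S.tbII := by
  intro p hp h
  exact (S.tbII_iff (le_max_right i _)).mpr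
    ((S.C i _ (le_max_left _ _)).π_tabooII p (hp _ (le_max_right _ _)) h)

lemma InvSys.stratExt {pl : Bool} {σ : List X → X} (hσ : IsStrategy S.Tinf pl σ)
    (m l : ℕ) (hl : S.Nf m ≤ l) :
    ∃ σ' : List X → X, IsStrategy (S.M l).T pl σ' ∧ ∀ q : List X, q.length < m → σ' q = σ q := by
  classical
  refine ⟨fun q => if h : q.length < m then σ q else
    (if h2 : ∃ a, q ++ [a] ∈ (S.M l).T then h2.choose else Classical.arbitrary X), ?_, ?_⟩
  · intro p hp hterm hturn hcons
    by_cases h : p.length < m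
    · simp only [dif_pos h]
      have hpT : p ∈ S.Tinf := (S.mem_iff (le_trans (S.mono h.le) hl)).mpr hp
      have hterm' : ¬ IsTerminal S.Tinf p := by
        intro ht
        apply hterm
        refine ⟨hp, fun a hmem => ?_⟩
        have hlen : S.Nf ((p ++ [a]).length) ≤ l := by
          simp only [List.length_append, List.length_singleton]
          exact le_trans (S.mono (by omega)) hl
        exact ht.2 a ((S.mem_iff hlen).mpr hmem)
      have hcons' : PosConsistent pl σ p := by
        intro t ht htt
        have h1 := hcons t ht htt
        exact h1.trans (dif_pos (by rw [List.length_take]; omega))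
      have hmain := hσ p hpT hterm' hturn hcons'
      have hlen : S.Nf ((p ++ [σ p]).length) ≤ l := by
        simp only [List.length_append, List.length_singleton]
        exact le_trans (S.mono (by omega)) hl
      exact (S.mem_iff hlen).mp hmain
    · simp only [dif_neg h]
      have h2 : ∃ a, p ++ [a] ∈ (S.M l).T := by
        by_contra hno
        push_neg at hno
        exact hterm ⟨hp, hno⟩
      rw [dif_pos h2]
      exact h2.choose_spec
  · intro q hq
    simp [dif_pos hq]

lemma InvSys.φinf_strategy (j : ℕ) (pl : Bool) (σ : List X → X)
    (hσ : IsStrategy S.Tinf pl σ) : IsStrategy (S.M j).T pl (S.φinf j pl σ) := by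
  intro p hp hterm hturn hcons
  obtain ⟨σ', hσ', hagree⟩ := S.stratExt hσ (p.length + 1) (max j (S.Nf (p.length + 1)))
    (le_max_right _ _)
  have key : ∀ q : List X, q.length < p.length + 1 →
      (S.C j _ (le_max_left j (S.Nf (p.length + 1)))).φ pl σ' q = S.φinf j pl σ q := by
    intro q hq
    rw [(S.C j _ (le_max_left _ _)).φ_local pl (p.length + 1) σ' σ hagree q hq]
    exact S.φeq (le_max_left _ _) pl σ q (le_trans (S.mono (by omega)) (le_max_right _ _))
  have hcons' : PosConsistent pl ((S.C j _ (le_max_left j (S.Nf (p.length + 1)))).φ pl σ') p := by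
    intro t ht htt
    rw [hcons t ht htt, key (p.take t) (by rw [List.length_take]; omega)]
  have hmain := (S.C j _ (le_max_left j (S.Nf (p.length + 1)))).φ_strategy pl σ' hσ'
    p hp hterm hturn hcons'
  rwa [key p (Nat.lt_succ_self _)] at hmain

lemma InvSys.φinf_comp (i j : ℕ) (hij : i ≤ j) (pl : Bool) (σ : List X → X) :
    S.φinf i pl σ = (S.C i j hij).φ pl (S.φinf j pl σ) := by
  funext q
  set l := max j (max i (S.Nf (q.length + 1))) with hldef
  have hjl : j ≤ l := le_max_left _ _
  have hil : i ≤ l := le_trans (le_max_left _ _) (le_max_right _ _)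
  have hNl : S.Nf (q.length + 1) ≤ l := le_trans (le_max_right _ _) (le_max_right _ _)
  rw [← S.φeq hil pl σ q hNl,
    show (S.C i l hil).φ pl σ = (S.C i l (hij.trans hjl)).φ pl σ from rfl,
    S.compφ i j l hij hjl pl σ]
  exact (S.C i j hij).φ_local pl (q.length + 1) _ _
    (fun r hr => S.φeq hjl pl σ r (le_trans (S.mono (by omega)) hNl)) q (Nat.lt_succ_self _)

end Stmt9Aux
namespace Stmt9Aux

lemma Playle_refl {X : Type u} (y : Play X) : Play.le y y := by
  cases y with
  | fin p => exact List.prefix_refl p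
  | inf x => rfl

lemma taboo_pullback {X : Type u} [Nonempty X] {Tc Mc : TabooTree X} (Cv : Covering Tc Mc)
    {pl : Bool} {z y : Play X} (hz : IsPlay Tc.T z) (heq : Play.map Cv.π z = y)
    (hy : PlayTabooFor Mc pl y) : PlayTabooFor Tc pl z := by
  cases z with
  | inf w =>
    cases y with
    | fin p => exact absurd heq (by simp [Play.map])
    | inf v => exact hy.elim
  | fin q =>
    cases y with
    | inf v => exact absurd heq (by simp [Play.map])
    | fin p =>
      have hπ : Cv.π q = p := by
        simpa [Play.map] using heq
      have hqT : q ∈ Tc.T := hz.1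
      cases pl with
      | true =>
        simp only [PlayTabooFor, if_true] at hy ⊢
        exact Cv.π_tabooI q hqT (hπ ▸ hy)
      | false =>
        simp only [PlayTabooFor, if_false] at hy ⊢
        exact Cv.π_tabooII q hqT (hπ ▸ hy)

variable {X : Type u} [Nonempty X] (S : InvSys X)

lemma InvSys.liftinf (i : ℕ) (pl : Bool) (σ : List X → X) (hσ : IsStrategy S.Tinf pl σ)
    (x : Play X) (hx : IsPlay (S.M i).T x) (hc : PlayConsistent pl (S.φinf i pl σ) x) :
    ∃ xt : Play X, IsPlay S.Tinf xt ∧ PlayConsistent pl σ xt ∧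
      Play.le (Play.map (S.πinf i) xt) x ∧
      (Play.map (S.πinf i) xt = x ∨ PlayTabooFor S.Minf pl xt) := by
  classical
  -- the one-step lifting
  have step : ∀ (j : ℕ) (y : Play X), IsPlay (S.M j).T y →
      PlayConsistent pl (S.φinf j pl σ) y →
      { z : Play X // IsPlay (S.M (j+1)).T z ∧ PlayConsistent pl (S.φinf (j+1) pl σ) z ∧
        Play.le (Play.map (S.C j (j+1) (Nat.le_succ j)).π z) y ∧
        (Play.map (S.C j (j+1) (Nat.le_succ j)).π z = y ∨ PlayTabooFor (S.M (j+1)) pl z) } := by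
    intro j y hy hcy
    apply Classical.indefiniteDescription
    have hcy' : PlayConsistent pl ((S.C j (j+1) (Nat.le_succ j)).φ pl (S.φinf (j+1) pl σ)) y := by
      rwa [← S.φinf_comp j (j+1) (Nat.le_succ j) pl σ]
    exact (S.C j (j+1) (Nat.le_succ j)).lifting pl (S.φinf (j+1) pl σ)
      (S.φinf_strategy (j+1) pl σ hσ) y hy hcy'
  -- the chain of lifted plays
  let chain : ∀ n : ℕ, { y : Play X // IsPlay (S.M (i+n)).T y ∧
      PlayConsistent pl (S.φinf (i+n) pl σ) y } :=
    fun n => Nat.rec ⟨x, hx, hc⟩ (fun n ih =>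
      ⟨(step (i+n) ih.1 ih.2.1 ih.2.2).1, (step (i+n) ih.1 ih.2.1 ih.2.2).2.1,
        (step (i+n) ih.1 ih.2.1 ih.2.2).2.2.1⟩) n
  set xs : ℕ → Play X := fun n => (chain n).1 with hxsdef
  have hP : ∀ n, IsPlay (S.M (i+n)).T (xs n) ∧ PlayConsistent pl (S.φinf (i+n) pl σ) (xs n) :=
    fun n => (chain n).2
  have hR : ∀ n, Play.le (Play.map (S.C (i+n) (i+n+1) (Nat.le_succ (i+n))).π (xs (n+1))) (xs n) ∧
      (Play.map (S.C (i+n) (i+n+1) (Nat.le_succ (i+n))).π (xs (n+1)) = xs n ∨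
        PlayTabooFor (S.M (i+n+1)) pl (xs (n+1))) :=
    fun n => (step (i+n) (chain n).1 (chain n).2.1 (chain n).2.2).2.2.2
  have hx0 : xs 0 = x := rfl
  -- the chain composed down to level i
  have hchain : ∀ n : ℕ, Play.le (Play.map (S.C i (i+(n+1)) (by omega)).π (xs (n+1))) x ∧
      (Play.map (S.C i (i+(n+1)) (by omega)).π (xs (n+1)) = x ∨
        PlayTabooFor (S.M (i+(n+1))) pl (xs (n+1))) := by
    intro n
    induction n with
    | zero => exact hR 0
    | succ n ih =>
      have hplay2 := (hP (n+2)).1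
      have h1 : Play.map (S.C i (i+(n+2)) (by omega)).π (xs (n+2)) =
          Play.map (S.C i (i+(n+1)) (by omega)).π
            (Play.map (S.C (i+(n+1)) (i+(n+2)) (by omega)).π (xs (n+2))) :=
        map_comp (S.compπ i (i+(n+1)) (i+(n+2)) (by omega) (by omega))
          ((S.C (i+(n+1)) (i+(n+2)) (by omega)).π_mono)
          ((S.C (i+(n+1)) (i+(n+2)) (by omega)).π_len)
          (isPlay_inTree hplay2)
      have h2 : Play.le (Play.map (S.C (i+(n+1)) (i+(n+2)) (by omega)).π (xs (n+2))) (xs (n+1)) :=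
        (hR (n+1)).1
      have h3 : Play.le
          (Play.map (S.C i (i+(n+1)) (by omega)).π
            (Play.map (S.C (i+(n+1)) (i+(n+2)) (by omega)).π (xs (n+2))))
          (Play.map (S.C i (i+(n+1)) (by omega)).π (xs (n+1))) :=
        le_map (S.M (i+(n+1))).isTree ((S.C i (i+(n+1)) (by omega)).π_mono)
          ((S.C i (i+(n+1)) (by omega)).π_len) (isPlay_inTree (hP (n+1)).1) h2
      constructor
      · rw [h1]
        exact Playle_trans h3 ih.1
      · rcases (hR (n+1)).2 with heq | htb
        · have heq' : Play.map (S.C (i+(n+1)) (i+(n+2)) (by omega)).π (xs (n+2)) = xs (n+1) := heq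
          rcases ih.2 with hx1 | htb'
          · left
            rw [h1, heq']
            exact hx1
          · right
            exact taboo_pullback (S.C (i+(n+1)) (i+(n+2)) (by omega)) (hP (n+2)).1 heq' htb'
        · exact Or.inr htb
  by_cases hinf : ∀ n, ∃ z : ℕ → X, xs n = Play.inf z
  · -- CASE A : all plays infinite
    choose z hz using hinf
    have hzb : ∀ n, z n ∈ body (S.M (i+n)).T := fun n => by
      have := (hP n).1; rwa [hz n] at this
    have hzc : ∀ n, BranchConsistent pl (S.φinf (i+n) pl σ) (z n) := fun n => by
      have := (hP n).2; rwa [hz n] at this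
    have hstep : ∀ n, bodyMap (S.C (i+n) (i+n+1) (Nat.le_succ (i+n))).π (z (n+1)) = z n := by
      intro n
      have := (hR n).1
      rw [hz n, hz (n+1)] at this
      exact this
    have hent : ∀ m n, S.Nf (m+1) ≤ i+n → z n m = z (n+1) m := by
      intro m n hn
      rw [← hstep n]
      have hid : (S.C (i+n) (i+n+1) (Nat.le_succ (i+n))).π (prefixFn (z (n+1)) (m+1)) =
          prefixFn (z (n+1)) (m+1) :=
        (S.stab (m+1) (i+n) (i+n+1) (Nat.le_succ (i+n)) hn).2.2.2.1 _
          (hzb (n+1) (m+1)) (by rw [prefixFn_length])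
      show bodyMap _ (z (n+1)) m = z (n+1) m
      rw [bodyMap, hid, prefixFn_getD]
    have hent' : ∀ m n n', n ≤ n' → S.Nf (m+1) ≤ i+n → z n m = z n' m := by
      intro m n n' hnn hn
      induction n', hnn using Nat.le_induction with
      | base => rfl
      | succ n' hnn ih => rw [ih, hent m n' (by omega)]
    set w : ℕ → X := fun m => z (S.Nf (m+1)) m with hwdef
    have hweq : ∀ m n, S.Nf (m+1) ≤ i+n → w m = z n m := by
      intro m n hn
      show z (S.Nf (m+1)) m = z n m
      rcases le_total (S.Nf (m+1)) n with h | h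
      · exact hent' m _ n h (by omega)
      · exact (hent' m n _ h hn).symm
    have hwpre : ∀ m n, S.Nf m ≤ i+n → prefixFn w m = prefixFn (z n) m := by
      intro m n hn
      apply List.ext_getElem (by rw [prefixFn_length, prefixFn_length])
      intro t h1 h2
      have htm : t < m := by simpa [prefixFn_length] using h1
      rw [prefixFn_getElem, prefixFn_getElem]
      exact hweq t n (le_trans (S.mono (by omega)) hn)
    have hwbody : w ∈ body S.Tinf := by
      intro m j hj
      have hj' : S.Nf m ≤ j := by simpa [prefixFn_length] using hj
      rw [hwpre m j (by omega)]
      exact (S.memAgree (n := m) (show S.Nf m ≤ i + j by omega) hj'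
        (by rw [prefixFn_length])).mp (hzb j m)
    have hwcons : BranchConsistent pl σ w := by
      intro m hturn
      have hn : S.Nf (m+1) ≤ i + S.Nf (m+1) := by omega
      rw [hweq m (S.Nf (m+1)) hn, hzc (S.Nf (m+1)) m hturn]
      have hag : S.φinf (i + S.Nf (m+1)) pl σ (prefixFn (z (S.Nf (m+1))) m) =
          σ (prefixFn (z (S.Nf (m+1))) m) :=
        S.σagree (by rw [prefixFn_length]; omega) pl σ
      rw [hag, ← hwpre m (S.Nf (m+1)) (le_trans (S.mono (by omega)) hn)]
    have hcompn : ∀ n, 1 ≤ n → bodyMap (S.C i (i+n) (by omega)).π (z n) = z 0 := by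
      intro n hn
      induction n with
      | zero => omega
      | succ n ih =>
        rcases Nat.lt_or_ge 1 (n+1) with h1 | h1
        · have hn' : 1 ≤ n := by omega
          have hplay2 := hzb (n+1)
          have hcomp3 := map_comp (X := X)
            (S.compπ i (i+n) (i+n+1) (by omega) (Nat.le_succ (i+n)))
            ((S.C (i+n) (i+n+1) (Nat.le_succ (i+n))).π_mono)
            ((S.C (i+n) (i+n+1) (Nat.le_succ (i+n))).π_len)
            (y := Play.inf (z (n+1))) hplay2
          have hcomp4 : bodyMap (S.C i (i+(n+1)) (by omega)).π (z (n+1)) =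
              bodyMap (S.C i (i+n) (by omega)).π
                (bodyMap (S.C (i+n) (i+n+1) (Nat.le_succ (i+n))).π (z (n+1))) := by
            have := hcomp3
            simp only [Play.map] at this
            exact congrArg (fun y : Play X => match y with
              | Play.inf v => v
              | Play.fin _ => z 0) this
          rw [hcomp4, hstep n, ih hn']
        · have hn0 : n = 0 := by omega
          subst hn0
          exact hstep 0
    have heqfinal : Play.map (S.πinf i) (Play.inf w) = x := by
      rw [← hx0, hz 0]
      show Play.inf (bodyMap (S.πinf i) w) = Play.inf (z 0)
      congr 1
      funext m
      have hn1 : 1 ≤ max 1 (S.Nf (m+1)) := le_max_left _ _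
      have hn2 : S.Nf (m+1) ≤ i + max 1 (S.Nf (m+1)) := by
        have := le_max_right 1 (S.Nf (m+1)); omega
      have hpT : prefixFn w (m+1) ∈ S.Tinf := hwbody (m+1)
      show (S.πinf i (prefixFn w (m+1))).getD m (Classical.arbitrary X) = z 0 m
      rw [← S.πeq (show i ≤ i + max 1 (S.Nf (m+1)) by omega) hpT
        (by rw [prefixFn_length]; exact hn2)]
      rw [hwpre (m+1) (max 1 (S.Nf (m+1))) (by omega)]
      rw [map_prefixFn ((S.C i (i + max 1 (S.Nf (m+1))) (by omega)).π_mono)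
        ((S.C i (i + max 1 (S.Nf (m+1))) (by omega)).π_len) (hzb (max 1 (S.Nf (m+1)))) (m+1)]
      rw [prefixFn_getD]
      rw [hcompn (max 1 (S.Nf (m+1))) hn1]
    refine ⟨Play.inf w, hwbody, hwcons, ?_, Or.inl heqfinal⟩
    rw [heqfinal]
    exact Playle_refl x
  · -- CASE B : some play is finite
    push_neg at hinf
    obtain ⟨n₀, hn₀⟩ := hinf
    have hfinn₀ : ∃ p, xs n₀ = Play.fin p := by
      cases hcc : xs n₀ with
      | fin p => exact ⟨p, rfl⟩
      | inf zz => exact absurd hcc (hn₀ zz)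
    have hfin : ∀ n, ∃ p, xs (n₀ + n) = Play.fin p := by
      intro n
      induction n with
      | zero => exact hfinn₀
      | succ n ih =>
        obtain ⟨p, hp⟩ := ih
        cases hcc : xs (n₀ + (n+1)) with
        | fin q => exact ⟨q, rfl⟩
        | inf zz =>
          have h1 := (hR (n₀ + n)).1
          rw [hp] at h1
          rw [show xs (n₀ + n + 1) = xs (n₀ + (n+1)) from rfl, hcc] at h1
          exact absurd h1 (by simp [Play.map, Play.le])
    choose pf hpf using hfin
    have hterm : ∀ n, IsTerminal (S.M (i+(n₀+n))).T (pf n) := fun n => by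
      have := (hP (n₀+n)).1; rwa [hpf n] at this
    have hle2 : ∀ n, (S.C (i+(n₀+n)) (i+(n₀+n)+1) (Nat.le_succ _)).π (pf (n+1)) <+: pf n := by
      intro n
      have h1 := (hR (n₀+n)).1
      rw [hpf n, show xs (n₀ + n + 1) = xs (n₀ + (n+1)) from rfl, hpf (n+1)] at h1
      exact h1
    have hlen2 : ∀ n, (pf (n+1)).length ≤ (pf n).length := by
      intro n
      have h1 := (hle2 n).length_le
      rwa [(S.C (i+(n₀+n)) (i+(n₀+n)+1) (Nat.le_succ _)).π_len _ (hterm (n+1)).1] at h1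
    have hlenmono : ∀ a b, a ≤ b → (pf b).length ≤ (pf a).length := by
      intro a b hab
      induction b, hab using Nat.le_induction with
      | base => exact le_refl _
      | succ b hab ih => exact le_trans (hlen2 b) ih
    set L := sInf (Set.range (fun n => (pf n).length)) with hLdef
    obtain ⟨n₁, hn₁⟩ : ∃ n₁, (pf n₁).length = L :=
      Nat.sInf_mem (Set.range_nonempty _)
    have hLn : ∀ n, n₁ ≤ n → (pf n).length = L := by
      intro n hn
      refine le_antisymm ?_ (Nat.sInf_le ⟨n, rfl⟩)
      rw [← hn₁]
      exact hlenmono n₁ n hn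
    set n₂ := max n₁ (S.Nf L) with hn₂def
    have hstabp : ∀ n, n₂ ≤ n → pf (n+1) = pf n := by
      intro n hn
      have hL1 : (pf (n+1)).length = L := hLn (n+1) (by omega)
      have hL0 : (pf n).length = L := hLn n (by omega)
      have h1 : (S.C (i+(n₀+n)) (i+(n₀+n)+1) (Nat.le_succ _)).π (pf (n+1)) = pf n :=
        (hle2 n).eq_of_length (by
          rw [(S.C (i+(n₀+n)) (i+(n₀+n)+1) (Nat.le_succ _)).π_len _ (hterm (n+1)).1, hL1, hL0])
      have h2 : (S.C (i+(n₀+n)) (i+(n₀+n)+1) (Nat.le_succ _)).π (pf (n+1)) = pf (n+1) :=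
        (S.stab L (i+(n₀+n)) (i+(n₀+n)+1) (Nat.le_succ _)
          (by have := le_max_right n₁ (S.Nf L); omega)).2.2.2.1 _
          (hterm (n+1)).1 (le_of_eq hL1)
      rw [← h1, h2]
    have hstabp' : ∀ n, n₂ ≤ n → pf n = pf n₂ := by
      intro n hn
      induction n, hn using Nat.le_induction with
      | base => rfl
      | succ n hn ih => rw [hstabp n hn, ih]
    set pinf := pf n₂ with hpinfdef
    have hpL : pinf.length = L := hLn n₂ (le_max_left _ _)
    have hNfL : S.Nf L ≤ n₂ := le_max_right _ _
    have hpmem : pinf ∈ S.Tinf := by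
      intro j hj
      have hj' : S.Nf L ≤ j := by rwa [hpL] at hj
      have h1 : pinf ∈ (S.M (i+(n₀+ max n₂ j))).T := by
        rw [← hstabp' (max n₂ j) (le_max_left _ _)]
        exact (hterm (max n₂ j)).1
      exact (S.memAgree (n := L)
        (show S.Nf L ≤ i+(n₀+ max n₂ j) by have := le_max_left n₂ j; omega)
        hj' (le_of_eq hpL)).mp h1
    have hpterm : IsTerminal S.Tinf pinf := by
      refine ⟨hpmem, fun a hmem => ?_⟩
      have h1 : IsTerminal (S.M (i+(n₀+ max n₂ (S.Nf (L+1))))).T pinf := by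
        rw [← hstabp' (max n₂ (S.Nf (L+1))) (le_max_left _ _)]
        exact hterm (max n₂ (S.Nf (L+1)))
      apply h1.2 a
      refine (S.mem_iff ?_).mp hmem
      simp only [List.length_append, List.length_singleton, hpL]
      have := le_max_right n₂ (S.Nf (L+1)); omega
    have hpcons : PosConsistent pl σ pinf := by
      intro t ht hturn
      have hc1 : PosConsistent pl (S.φinf (i+(n₀+n₂)) pl σ) pinf := by
        have := (hP (n₀+n₂)).2
        rwa [hpf n₂] at this
      rw [hc1 t ht hturn]
      refine S.σagree ?_ pl σ
      rw [List.length_take]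
      have htL : t < L := by rwa [hpL] at ht
      have := le_trans (S.mono (show min t pinf.length + 1 ≤ L by omega)) hNfL
      omega
    -- conclude via the chain at stage n₀ + n₂
    have hch := hchain (n₀ + n₂)
    have hxs1 : xs (n₀ + n₂ + 1) = Play.fin (pf (n₂ + 1)) := hpf (n₂ + 1)
    rw [hxs1, hstabp n₂ le_rfl] at hch
    have hπp : (S.C i (i + (n₀ + n₂ + 1)) (by omega)).π pinf = S.πinf i pinf :=
      S.πeq (by omega) hpmem (by rw [hpL]; omega)
    have hmapeq : Play.map (S.C i (i + (n₀ + n₂ + 1)) (by omega)).π (Play.fin pinf) =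
        Play.map (S.πinf i) (Play.fin pinf) := by
      show Play.fin _ = Play.fin _
      rw [hπp]
    rw [hmapeq] at hch
    refine ⟨Play.fin pinf, hpterm, hpcons, hch.1, ?_⟩
    rcases hch.2 with heq | htb
    · exact Or.inl heq
    · right
      cases pl with
      | true =>
        simp only [PlayTabooFor, if_true] at htb ⊢
        refine (S.tbI_iff (j := i + (n₀ + n₂ + 1)) ?_).mpr htb
        rw [hpL]; omega
      | false =>
        simp only [PlayTabooFor, if_false] at htb ⊢
        refine (S.tbII_iff (j := i + (n₀ + n₂ + 1)) ?_).mpr htb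
        rw [hpL]; omega

end Stmt9Aux

namespace Stmt9Aux

variable {X : Type u} [Nonempty X] (S : InvSys X)

lemma InvSys.φinf_local (i : ℕ) : ∀ (pl : Bool) (n : ℕ) (σ σ' : List X → X),
    (∀ p : List X, p.length < n → σ p = σ' p) →
    ∀ q : List X, q.length < n → S.φinf i pl σ q = S.φinf i pl σ' q :=
  fun pl n σ σ' hag q hq => (S.C i _ (le_max_left _ _)).φ_local pl n σ σ' hag q hq

/-- The limit covering. -/
noncomputable def InvSys.Cinf (i : ℕ) : Covering S.Minf (S.M i) where
  π := S.πinf i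
  π_maps := S.πinf_maps i
  π_mono := S.πinf_mono i
  π_len := S.πinf_len i
  π_tabooI := S.πinf_tabooI i
  π_tabooII := S.πinf_tabooII i
  φ := S.φinf i
  φ_strategy := fun pl σ hσ => S.φinf_strategy i pl σ hσ
  φ_local := S.φinf_local i
  lifting := S.liftinf i

end Stmt9Aux

/-- the inverse limit of an inverse system of `k`-coverings whose levels
eventually stabilize: there is a game tree with taboos `M∞` together with `k`-coverings
`C∞ i` of each `M i` such that `C∞ i = C i j ∘ C∞ j` for all `i ≤ j`. -/
theorem stmt9 {X : Type*} [Nonempty X] (k : ℕ) (M : ℕ → TabooTree X)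
    (C : ∀ i j : ℕ, i ≤ j → Covering (M j) (M i))
    (hk : ∀ (i j : ℕ) (h : i ≤ j), IsKCovering k (C i j h))
    (hcomp : ∀ (i j l : ℕ) (hij : i ≤ j) (hjl : j ≤ l),
      (∀ p ∈ (M l).T, (C i l (le_trans hij hjl)).π p = (C i j hij).π ((C j l hjl).π p)) ∧
      (∀ (pl : Bool) (σ : List X → X),
        (C i l (le_trans hij hjl)).φ pl σ = (C i j hij).φ pl ((C j l hjl).φ pl σ)))
    (hstab : ∀ n : ℕ, ∃ N : ℕ, ∀ (j j' : ℕ) (h : j ≤ j'), N ≤ j → IsKCovering n (C j j' h)) :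
    ∃ (Tinf : TabooTree X) (Cinf : ∀ i : ℕ, Covering Tinf (M i)),
      (∀ i, IsKCovering k (Cinf i)) ∧
      (∀ (i j : ℕ) (h : i ≤ j),
        (∀ p ∈ Tinf.T, (Cinf i).π p = (C i j h).π ((Cinf j).π p)) ∧
        (∀ (pl : Bool) (σ : List X → X),
          (Cinf i).φ pl σ = (C i j h).φ pl ((Cinf j).φ pl σ))) := by
  classical
  choose N₀ hN₀ using hstab
  set Nf : ℕ → ℕ := fun n => (Finset.range (n+1)).sup N₀ with hNfdef
  have hNfmono : Monotone Nf := fun a b hab =>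
    Finset.sup_mono (Finset.range_subset_range.mpr (by omega))
  have hNle : ∀ n, N₀ n ≤ Nf n := fun n => Finset.le_sup (Finset.self_mem_range_succ n)
  set S : Stmt9Aux.InvSys X :=
    { M := M, C := C, Nf := Nf, mono := hNfmono,
      compπ := fun i j l hij hjl => (hcomp i j l hij hjl).1,
      compφ := fun i j l hij hjl => (hcomp i j l hij hjl).2,
      stab := fun n j j' h hj => hN₀ n j j' h (le_trans (hNle n) hj) } with hSdef
  refine ⟨S.Minf, fun i => S.Cinf i, ?_, ?_⟩
  · -- each Cinf i is a k-covering
    intro i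
    refine ⟨?_, ?_, ?_, ?_, ?_⟩
    · intro p hp
      have h1 : p ∈ S.Minf.T ↔ p ∈ (S.M (max i (S.Nf p.length))).T :=
        S.mem_iff (le_max_right _ _)
      have h2 := (hk i (max i (S.Nf p.length)) (le_max_left _ _)).1 p hp
      exact h1.trans h2
    · intro p hp
      have h1 : p ∈ S.Minf.tabooI ↔ p ∈ (S.M (max i (S.Nf p.length))).tabooI :=
        S.tbI_iff (le_max_right _ _)
      have h2 := (hk i (max i (S.Nf p.length)) (le_max_left _ _)).2.1 p hp
      exact h1.trans h2
    · intro p hp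
      have h1 : p ∈ S.Minf.tabooII ↔ p ∈ (S.M (max i (S.Nf p.length))).tabooII :=
        S.tbII_iff (le_max_right _ _)
      have h2 := (hk i (max i (S.Nf p.length)) (le_max_left _ _)).2.2.1 p hp
      exact h1.trans h2
    · intro p hp hlen
      exact (hk i (max i (S.Nf p.length)) (le_max_left _ _)).2.2.2.1 p
        (hp _ (le_max_right _ _)) hlen
    · intro pl σ q hq
      exact (hk i (max i (S.Nf (q.length + 1))) (le_max_left _ _)).2.2.2.2 pl σ q hq
  · -- compatibility with the system
    intro i j h
    constructor
    · intro p hp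
      show S.πinf i p = (C i j h).π (S.πinf j p)
      have hjl : j ≤ max j (max i (S.Nf p.length)) := le_max_left _ _
      have hil : i ≤ max j (max i (S.Nf p.length)) :=
        le_trans (le_max_left _ _) (le_max_right _ _)
      have hNp : S.Nf p.length ≤ max j (max i (S.Nf p.length)) :=
        le_trans (le_max_right _ _) (le_max_right _ _)
      rw [← S.πeq hjl hp hNp, ← S.πeq hil hp hNp]
      exact S.compπ i j _ h hjl p (hp _ hNp)
    · intro pl σ
      exact S.φinf_comp i j h pl σ
end
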